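/- arXiv:1108.0172 — 8 statements merged into one kernel-verified Lean document; each statement's English description precedes it below -/
import Mathlib

section
/- Let P be a Laurent polynomial in ℂ[z,z⁻¹] that does not lie in ℂ[z] and does not lie in ℂ[z⁻¹]. Suppose P = g ∘ h, where g, h ∈ ℂ(z) are nonconstant rational functions and the composition is taken as rational maps. Then there exists a degree-one rational function (Möbius transformation) μ ∈ ℂ(z) such that, setting G := g ∘ μ and H := μ⁻¹ ∘ h, one of the following holds: (1) G ∈ ℂ[z] is a polynomial and H ∈ ℂ[z,z⁻¹] is a Laurent polynomial, or (2) G ∈ ℂ[z,z⁻¹] is a Laurent polynomial and H = z^k for some positive integer k. -/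
/-- `f` agrees with `g` at all but finitely many points of `ℂ`. -/
def EqCofinite (f g : ℂ → ℂ) : Prop := {z : ℂ | f z ≠ g z}.Finite

/-- `f` is (the evaluation map of) a Laurent polynomial, away from finitely many points. -/
def IsLaurentCof (f : ℂ → ℂ) : Prop :=
  ∃ (s : Finset ℤ) (a : ℤ → ℂ), EqCofinite f (fun z => ∑ k ∈ s, a k * z ^ k)

/-- `f` is (the evaluation map of) a polynomial, away from finitely many points. -/
def IsPolyCof (f : ℂ → ℂ) : Prop :=
  ∃ p : Polynomial ℂ, EqCofinite f (fun z => p.eval z)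

/-- `f` is a rational function: a quotient of polynomials, wherever the denominator
does not vanish. -/
def IsRatFun (f : ℂ → ℂ) : Prop :=
  ∃ p q : Polynomial ℂ, q ≠ 0 ∧ ∀ z : ℂ, q.eval z ≠ 0 → f z = p.eval z / q.eval z

/-- `μ` is a Möbius transformation (degree-one rational function). -/
def IsMobius (μ : ℂ → ℂ) : Prop :=
  ∃ a b c d : ℂ, a * d - b * c ≠ 0 ∧ ∀ z : ℂ, c * z + d ≠ 0 → μ z = (a * z + b) / (c * z + d)

/-!
Write `g = p / q` and `h = r / s` in lowest terms, let `D = max (deg p) (deg q)` and let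
`Q(x, y) = y ^ D q (x / y)` be the homogenised denominator, whose zeros `[x : y] ∈ ℙ¹` are the
poles of `g`. Clearing denominators, `g ∘ h = U / V` with `V(z) = Q(r z, s z)` and `U`, `V`
without common zeros; since `g ∘ h = P` has no poles in `ℂ*`, `V` vanishes only at `0`. Hence for
every pole `[x : y]` of `g` the fibre polynomial `y r - x s`, which vanishes exactly where
`h = [x : y]`, is a monomial `c z ^ e`. The fibre is linear in `(x, y)` and injective because `h`
is nonconstant, so distinct poles have fibres with distinct exponents.

If all poles of `g` are one point `[v]`, take a Möbius map `μ` with `μ ∞ = [v]`: then `g ∘ μ` has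
no finite pole, so it is a polynomial, and `μ⁻¹ ∘ h` has the monomial fibre over `[v]` as
denominator, so it is a Laurent polynomial. If `g` has two distinct poles `[v₁]`, `[v₂]`, with
fibre exponents `e₁ < e₂`, take `μ ∞ = [v₁]` and `μ 0 = [v₂]`: then `μ⁻¹ ∘ h` is a quotient of the
two monomial fibres, normalised to `z ^ (e₂ - e₁)`, and a pole `μ z` of `g` with `z ≠ 0` would have
as fibre a combination of those two monomials with nonzero coefficients, which is not a monomial;
so `g ∘ μ` has poles only at `0` and `∞`.
-/

open Polynomial

section Algebra

variable {K : Type*} [Field K]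

def IsMonomial (f : K[X]) : Prop := ∃ (c : K) (e : ℕ), c ≠ 0 ∧ f = C c * X ^ e

theorem isMonomial_of_roots_subset_zero [IsAlgClosed K] {f : K[X]} (hf : f ≠ 0)
    (h : ∀ z, f.eval z = 0 → z = 0) : IsMonomial f := by
  obtain ⟨g, hfg, hXg⟩ := exists_eq_pow_rootMultiplicity_mul_and_not_dvd f hf 0
  generalize f.rootMultiplicity 0 = n at hfg
  have hg : g.degree = 0 := by
    by_contra hdeg
    obtain ⟨z, hz⟩ := IsAlgClosed.exists_root g hdeg
    obtain rfl : z = 0 := h z (by rw [hfg, eval_mul, hz.eq_zero, mul_zero])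
    exact hXg (dvd_iff_isRoot.mpr hz)
  refine ⟨g.coeff 0, n, fun h0 => ?_, ?_⟩
  · exact hf (by rw [hfg, eq_C_of_degree_eq_zero hg, h0, C_0, mul_zero])
  · rw [hfg, eq_C_of_degree_eq_zero hg, C_0, sub_zero, mul_comm, coeff_C_zero]

theorem C_mul_X_pow_add_C_mul_X_pow_ne {a b c : K} {i j k : ℕ} (ha : a ≠ 0) (hb : b ≠ 0)
    (hij : i ≠ j) : C a * X ^ i + C b * X ^ j ≠ C c * X ^ k := by
  intro h
  have hi := congrArg (coeff · i) h
  have hj := congrArg (coeff · j) h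
  simp only [coeff_add, coeff_C_mul_X_pow, if_neg hij, if_neg hij.symm] at hi hj
  split_ifs at hi hj <;> simp_all

theorem MvPolynomial.polynomial_eval_aeval {R σ : Type*} [CommSemiring R] (g : σ → R[X])
    (φ : MvPolynomial σ R) (z : R) :
    (MvPolynomial.aeval g φ).eval z = MvPolynomial.eval (fun i => (g i).eval z) φ := by
  rw [MvPolynomial.aeval_def, MvPolynomial.polynomial_eval_eval₂]
  congr 1
  ext
  simp

theorem Polynomial.eval_homogenize_eq_sum {R : Type*} [CommSemiring R] (f : R[X]) (D : ℕ)
    (v : Fin 2 → R) :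
    MvPolynomial.eval v (f.homogenize D) =
      ∑ i ∈ Finset.range (D + 1), f.coeff i * v 0 ^ i * v 1 ^ (D - i) := by
  simp only [homogenize, Finset.Nat.sum_antidiagonal_eq_sum_range_succ_mk, MvPolynomial.eval_sum]
  refine Finset.sum_congr rfl fun i _ => ?_
  rw [MvPolynomial.eval_monomial, Finsupp.update_eq_add_single, Finsupp.prod_add_index',
    Finsupp.prod_single_index, Finsupp.prod_single_index]
  · ring
  all_goals simp [pow_add]

theorem Polynomial.eval_homogenize_smul {R : Type*} [CommSemiring R] (f : R[X]) (D : ℕ) (c : R)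
    (v : Fin 2 → R) :
    MvPolynomial.eval (c • v) (f.homogenize D) = c ^ D * MvPolynomial.eval v (f.homogenize D) := by
  simp only [eval_homogenize_eq_sum, Finset.mul_sum, Pi.smul_apply, smul_eq_mul]
  refine Finset.sum_congr rfl fun i hi => ?_
  rw [Finset.mem_range] at hi
  rw [show D = i + (D - i) by omega, pow_add]
  simp only [Nat.add_sub_cancel_left]
  ring

theorem Polynomial.eval_homogenize_of_apply_one_eq_zero {R : Type*} [CommSemiring R] (f : R[X])
    (D : ℕ) {v : Fin 2 → R} (hv : v 1 = 0) :
    MvPolynomial.eval v (f.homogenize D) = f.coeff D * v 0 ^ D := by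
  rw [eval_homogenize_eq_sum, Finset.sum_eq_single D]
  · simp
  · intro i hi hiD
    rw [Finset.mem_range] at hi
    rw [hv, zero_pow (by omega), mul_zero]
  · simp

/-- `s ^ D * f (r / s)`, for `D ≥ deg f`. -/
noncomputable def Polynomial.homogenizeComp {R : Type*} [CommSemiring R] (f : R[X]) (D : ℕ)
    (r s : R[X]) : R[X] :=
  MvPolynomial.aeval ![r, s] (f.homogenize D)

theorem Polynomial.eval_homogenizeComp {R : Type*} [CommSemiring R] (f : R[X]) (D : ℕ)
    (r s : R[X]) (z : R) :
    (f.homogenizeComp D r s).eval z = MvPolynomial.eval ![r.eval z, s.eval z] (f.homogenize D) := by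
  have hrs : (fun i => (![r, s] i).eval z) = ![r.eval z, s.eval z] := by
    funext i
    fin_cases i <;> rfl
  rw [homogenizeComp, MvPolynomial.polynomial_eval_aeval, hrs]

theorem Polynomial.eval_homogenize_max_ne_zero_or {p q : K[X]} (hpq : IsCoprime p q)
    (hq : q ≠ 0) {v : Fin 2 → K} (hv : v ≠ 0) :
    MvPolynomial.eval v (p.homogenize (max p.natDegree q.natDegree)) ≠ 0 ∨
      MvPolynomial.eval v (q.homogenize (max p.natDegree q.natDegree)) ≠ 0 := by
  by_contra! h
  obtain ⟨a, b, hab⟩ := hpq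
  by_cases hv1 : v 1 = 0
  · have hv0 : v 0 ≠ 0 := fun hv0 => hv (by ext i; fin_cases i <;> simp [hv0, hv1])
    simp only [eval_homogenize_of_apply_one_eq_zero _ _ hv1, mul_eq_zero, pow_eq_zero_iff', hv0,
      false_and, or_false] at h
    rcases le_or_gt p.natDegree q.natDegree with hle | hlt
    · exact hq (leadingCoeff_eq_zero.mp (by simpa [max_eq_right hle] using h.2))
    · exact ne_zero_of_natDegree_gt hlt
        (leadingCoeff_eq_zero.mp (by simpa [max_eq_left hlt.le] using h.1))
  · simp only [eval_homogenize (le_max_left _ _) _ hv1, eval_homogenize (le_max_right _ _) _ hv1,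
      mul_eq_zero, pow_eq_zero_iff', hv1, false_and, or_false] at h
    simpa [h.1, h.2] using congrArg (eval (v 0 / v 1)) hab

theorem exists_ne_zero_eval_homogenize_eq_zero [IsAlgClosed K] {q : K[X]} {D : ℕ}
    (hqD : q.natDegree ≤ D) (hD : 0 < D) :
    ∃ v : Fin 2 → K, v ≠ 0 ∧ MvPolynomial.eval v (q.homogenize D) = 0 := by
  rcases hqD.lt_or_eq with hlt | rfl
  · refine ⟨![1, 0], by simp, ?_⟩
    rw [eval_homogenize_of_apply_one_eq_zero _ _ rfl, coeff_eq_zero_of_natDegree_lt hlt,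
      zero_mul]
  · obtain ⟨w, hw⟩ := IsAlgClosed.exists_root q (natDegree_pos_iff_degree_pos.mp hD).ne'
    refine ⟨![w, 1], by simp, ?_⟩
    rw [eval_homogenize le_rfl _ one_ne_zero]
    simp [hw.eq_zero]

def cross (v w : Fin 2 → K) : K := v 0 * w 1 - v 1 * w 0

theorem cross_swap (u v : Fin 2 → K) : cross v u = -cross u v := by
  unfold cross
  ring

theorem left_ne_zero_of_cross_ne_zero {u v : Fin 2 → K} (h : cross u v ≠ 0) : u ≠ 0 := by
  rintro rfl
  simp [cross] at h

theorem right_ne_zero_of_cross_ne_zero {u v : Fin 2 → K} (h : cross u v ≠ 0) : v ≠ 0 :=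
  left_ne_zero_of_cross_ne_zero (by rwa [cross_swap, neg_ne_zero])

theorem exists_cross_ne_zero {v : Fin 2 → K} (hv : v ≠ 0) : ∃ w, cross v w ≠ 0 := by
  by_cases h0 : v 0 = 0
  · refine ⟨![-1, 0], ?_⟩
    have h1 : v 1 ≠ 0 := fun h1 => hv (by ext i; fin_cases i <;> simp [h0, h1])
    simpa [cross] using h1
  · exact ⟨![0, 1], by simpa [cross] using h0⟩

theorem exists_eq_smul_of_cross_eq_zero {u v : Fin 2 → K} (hv : v ≠ 0) (h : cross u v = 0) :
    ∃ c : K, u = c • v := by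
  unfold cross at h
  by_cases h0 : v 0 = 0
  · have h1 : v 1 ≠ 0 := fun h1 => hv (by ext i; fin_cases i <;> simp [h0, h1])
    refine ⟨u 1 / v 1, funext fun i => ?_⟩
    fin_cases i
    · simpa [h0, h1] using h
    · simp [h1]
  · refine ⟨u 0 / v 0, funext fun i => ?_⟩
    fin_cases i
    · simp [h0]
    · simp only [Fin.mk_one, Pi.smul_apply, smul_eq_mul]
      field_simp
      linear_combination -h

/-- With `v` read as the point `[v 0 : v 1]` of `ℙ¹`, the zeros of `fibre r s v` are the points
where `r / s` takes the value `[v 0 : v 1]`. -/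
noncomputable def fibre (r s : K[X]) : (Fin 2 → K) →ₗ[K] K[X] :=
  (LinearMap.proj 1).smulRight r - (LinearMap.proj 0).smulRight s

theorem fibre_apply (r s : K[X]) (v : Fin 2 → K) : fibre r s v = v 1 • r - v 0 • s := rfl

theorem eval_fibre (r s : K[X]) (v : Fin 2 → K) (z : K) :
    (fibre r s v).eval z = cross ![r.eval z, s.eval z] v := by
  simp [fibre_apply, cross]
  ring

theorem fibre_ne_zero {r s : K[X]} (hrs : LinearIndependent K ![r, s]) {v : Fin 2 → K}
    (hv : v ≠ 0) : fibre r s v ≠ 0 := by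
  intro h
  obtain ⟨h1, h0⟩ := LinearIndependent.pair_iff.mp hrs (v 1) (-v 0) (by
    rw [neg_smul, ← sub_eq_add_neg, ← fibre_apply]; exact h)
  exact hv (by ext i; fin_cases i <;> simp_all)

theorem exponent_ne_of_cross_ne_zero {r s : K[X]} (hrs : LinearIndependent K ![r, s])
    {v₁ v₂ : Fin 2 → K} (h₁₂ : cross v₁ v₂ ≠ 0) {c₁ c₂ : K} {e₁ e₂ : ℕ} (hc₁ : c₁ ≠ 0)
    (hf₁ : fibre r s v₁ = C c₁ * X ^ e₁) (hf₂ : fibre r s v₂ = C c₂ * X ^ e₂) : e₁ ≠ e₂ := by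
  rintro rfl
  have hcross : cross (c₂ • v₁ - c₁ • v₂) v₁ = c₁ * cross v₁ v₂ := by
    simp only [cross, Pi.sub_apply, Pi.smul_apply, smul_eq_mul]
    ring
  refine fibre_ne_zero hrs (left_ne_zero_of_cross_ne_zero (v := v₁) ?_) (v := c₂ • v₁ - c₁ • v₂) ?_
  · rw [hcross]
    exact mul_ne_zero hc₁ h₁₂
  · simp only [map_sub, map_smul, hf₁, hf₂, smul_eq_C_mul]
    ring

theorem isMonomial_fibre [IsAlgClosed K] {q r s : K[X]} {D : ℕ}
    (hrs : LinearIndependent K ![r, s])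
    (hpoles : ∀ z, MvPolynomial.eval ![r.eval z, s.eval z] (q.homogenize D) = 0 → z = 0)
    {v : Fin 2 → K} (hv : v ≠ 0) (hqv : MvPolynomial.eval v (q.homogenize D) = 0) :
    IsMonomial (fibre r s v) := by
  refine isMonomial_of_roots_subset_zero (fibre_ne_zero hrs hv) fun z hz => hpoles z ?_
  obtain ⟨c, hc⟩ := exists_eq_smul_of_cross_eq_zero hv (by rwa [eval_fibre] at hz)
  rw [hc, eval_homogenize_smul, hqv, mul_zero]

theorem vec_eval_ne_zero_of_isCoprime {r s : K[X]} (hrs : IsCoprime r s) (z : K) :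
    ![r.eval z, s.eval z] ≠ 0 := by
  obtain ⟨a, b, hab⟩ := hrs
  intro h
  have := congrArg (eval z) hab
  have h0 : r.eval z = 0 := congrFun h 0
  have h1 : s.eval z = 0 := congrFun h 1
  simp [h0, h1] at this

end Algebra

theorem EqCofinite.symm {f g : ℂ → ℂ} (h : EqCofinite f g) : EqCofinite g f := by
  simpa only [EqCofinite, ne_comm] using h

theorem EqCofinite.trans {f g k : ℂ → ℂ} (h₁ : EqCofinite f g) (h₂ : EqCofinite g k) :
    EqCofinite f k :=
  (h₁.union h₂).subset fun z hz => by
    by_contra hz'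
    simp only [Set.mem_union, Set.mem_ofPred_eq, not_or, not_not] at hz'
    exact hz (hz'.1.trans hz'.2)

theorem EqCofinite.of_eqOn_compl {f g : ℂ → ℂ} {S : Set ℂ} (hS : S.Finite)
    (h : ∀ z ∉ S, f z = g z) : EqCofinite f g :=
  hS.subset fun z hz => by_contra fun hzS => hz (h z hzS)

theorem Polynomial.eq_of_eqCofinite {f g : ℂ[X]} (h : EqCofinite f.eval g.eval) : f = g :=
  eq_of_infinite_eval_eq f g <| h.infinite_compl.mono fun _ hz => not_not.mp hz

theorem finite_setOf_div_mem {r s : ℂ[X]} (hrs : LinearIndependent ℂ ![r, s]) {B : Set ℂ}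
    (hB : B.Finite) : {z | s.eval z ≠ 0 ∧ r.eval z / s.eval z ∈ B}.Finite := by
  refine (hB.biUnion fun c _ => finite_setOfPred_isRoot
    (fibre_ne_zero hrs (v := ![c, 1]) (by simp))).subset fun z ⟨hs, hzB⟩ => ?_
  refine Set.mem_biUnion hzB ?_
  show eval z (fibre r s _) = 0
  simp [eval_fibre, cross, mul_div_cancel₀ _ hs]

theorem EqCofinite.comp_div {g h : ℂ → ℂ} {p q r s : ℂ[X]} {D : ℕ}
    (hg : EqCofinite g fun z => p.eval z / q.eval z)
    (hh : EqCofinite h fun z => r.eval z / s.eval z) (hrs : LinearIndependent ℂ ![r, s])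
    (hp : p.natDegree ≤ D) (hq : q.natDegree ≤ D) :
    EqCofinite (g ∘ h) fun z =>
      (p.homogenizeComp D r s).eval z / (q.homogenizeComp D r s).eval z := by
  refine .of_eqOn_compl ((hh.union (finite_setOfPred_isRoot (hrs.ne_zero 1))).union
    (finite_setOf_div_mem hrs hg)) fun z hz => ?_
  simp only [Set.mem_union, Set.mem_ofPred_eq, not_or, not_and, not_not] at hz
  obtain ⟨⟨hhz, hsz⟩, hgz⟩ := hz
  have hsz : s.eval z ≠ 0 := by simpa using hsz
  have hvz : ![r.eval z, s.eval z] 1 ≠ 0 := hsz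
  rw [Function.comp_apply, hhz, hgz hsz, eval_homogenizeComp, eval_homogenizeComp,
    eval_homogenize hp _ hvz, eval_homogenize hq _ hvz]
  simp only [Matrix.cons_val_zero, Matrix.cons_val_one]
  rw [mul_div_mul_right _ _ (pow_ne_zero _ hsz)]

theorem IsRatFun.exists_coprime {f : ℂ → ℂ} (hf : IsRatFun f) :
    ∃ p q : ℂ[X], IsCoprime p q ∧ q ≠ 0 ∧ EqCofinite f fun z => p.eval z / q.eval z := by
  obtain ⟨p, q, hq, hf⟩ := hf
  set d := GCDMonoid.gcd p q
  refine ⟨p / d, q / d, isCoprime_div_gcd_div_gcd hq, right_div_gcd_ne_zero hq,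
    .of_eqOn_compl (finite_setOfPred_isRoot hq) fun z hz => ?_⟩
  have hd : d ≠ 0 := gcd_ne_zero_of_right hq
  have hp := EuclideanDomain.mul_div_cancel' hd (gcd_dvd_left p q)
  have hq' := EuclideanDomain.mul_div_cancel' hd (gcd_dvd_right p q)
  have hdz : d.eval z ≠ 0 := left_ne_zero_of_mul (by rwa [← eval_mul, hq'])
  rw [hf z hz]
  conv_lhs => rw [← hp, ← hq', eval_mul, eval_mul]
  exact mul_div_mul_left _ _ hdz

theorem linearIndependent_of_not_eqCofinite_const {h : ℂ → ℂ} {r s : ℂ[X]} (hs : s ≠ 0)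
    (hh : EqCofinite h fun z => r.eval z / s.eval z) (hnc : ¬∃ c, EqCofinite h fun _ => c) :
    LinearIndependent ℂ ![r, s] := by
  refine LinearIndependent.pair_iff.mpr fun a b hab => ?_
  by_cases ha : a = 0
  · subst ha
    simpa [hs] using hab
  · refine absurd ⟨-b / a, hh.trans (.of_eqOn_compl (finite_setOfPred_isRoot hs) fun z hz => ?_)⟩ hnc
    have hz : s.eval z ≠ 0 := hz
    have := congrArg (eval z) hab
    simp only [eval_add, eval_smul, smul_eq_mul, eval_zero] at this
    field_simp
    linear_combination this

theorem pos_max_natDegree_of_not_eqCofinite_const {g : ℂ → ℂ} {p q : ℂ[X]}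
    (hg : EqCofinite g fun z => p.eval z / q.eval z) (hnc : ¬∃ c, EqCofinite g fun _ => c) :
    0 < max p.natDegree q.natDegree := by
  by_contra! hD
  obtain ⟨hp, hq⟩ : p.natDegree = 0 ∧ q.natDegree = 0 := by omega
  refine hnc ⟨p.coeff 0 / q.coeff 0, hg.trans (.of_eqOn_compl Set.finite_empty fun z _ => ?_)⟩
  rw [eq_C_of_natDegree_eq_zero hp, eq_C_of_natDegree_eq_zero hq]
  simp

theorem isLaurentCof_div_C_mul_X_pow (f : ℂ[X]) {c : ℂ} (hc : c ≠ 0) (e : ℕ) :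
    IsLaurentCof fun z => f.eval z / (c * z ^ e) := by
  refine ⟨(Finset.range (f.natDegree + 1)).image fun i : ℕ => (i : ℤ) - e,
    fun k => f.coeff (k + e).toNat / c, .of_eqOn_compl (Set.finite_singleton 0) fun z hz => ?_⟩
  rw [Set.mem_singleton_iff] at hz
  rw [Finset.sum_image (fun a _ b _ h => by simpa using h), eval_eq_sum_range, Finset.sum_div]
  refine Finset.sum_congr rfl fun i _ => ?_
  dsimp only
  rw [show ((i : ℤ) - e + e).toNat = i by omega, zpow_sub₀ hz, zpow_natCast, zpow_natCast]
  field_simp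

theorem IsLaurentCof.of_eqCofinite_div {F : ℂ → ℂ} {U V : ℂ[X]}
    (hF : EqCofinite F fun z => U.eval z / V.eval z) (hV : ∀ z, V.eval z = 0 → z = 0) :
    IsLaurentCof F := by
  have hV0 : V ≠ 0 := fun h => one_ne_zero (hV 1 (by simp [h]))
  obtain ⟨c, e, hc, rfl⟩ := isMonomial_of_roots_subset_zero hV0 hV
  obtain ⟨S, a, hS⟩ := isLaurentCof_div_C_mul_X_pow U hc e
  exact ⟨S, a, hF.trans (by simpa using hS)⟩

theorem IsPolyCof.of_eqCofinite_div {F : ℂ → ℂ} {U V : ℂ[X]}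
    (hF : EqCofinite F fun z => U.eval z / V.eval z) (hV : ∀ z, V.eval z ≠ 0) :
    IsPolyCof F := by
  have hdeg : V.degree = 0 := by
    by_contra hdeg
    obtain ⟨z, hz⟩ := IsAlgClosed.exists_root V hdeg
    exact hV z hz
  refine ⟨C (V.coeff 0)⁻¹ * U, hF.trans (.of_eqOn_compl Set.finite_empty fun z _ => ?_)⟩
  rw [eq_C_of_degree_eq_zero hdeg]
  simp [div_eq_inv_mul]

theorem exists_eqCofinite_div_X_pow {P : ℂ → ℂ}
    (hP : ∃ (S : Finset ℤ) (a : ℤ → ℂ), ∀ z : ℂ, z ≠ 0 → P z = ∑ k ∈ S, a k * z ^ k) :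
    ∃ (A : ℂ[X]) (m : ℕ), EqCofinite P fun z => A.eval z / z ^ m := by
  obtain ⟨S, a, hP⟩ := hP
  set m := S.sup Int.natAbs
  refine ⟨∑ k ∈ S, C (a k) * X ^ (k + m).toNat, m,
    .of_eqOn_compl (Set.finite_singleton 0) fun z hz => ?_⟩
  rw [Set.mem_singleton_iff] at hz
  rw [hP z hz, eval_finsetSum, Finset.sum_div]
  refine Finset.sum_congr rfl fun k hk => ?_
  have hkm : 0 ≤ k + m := by
    have := Finset.le_sup (f := Int.natAbs) hk
    omega
  rw [eval_mul, eval_C, eval_pow, eval_X, ← zpow_natCast, Int.toNat_of_nonneg hkm,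
    ← zpow_natCast, zpow_add₀ hz, ← mul_assoc, mul_div_cancel_right₀ _ (zpow_ne_zero _ hz)]

theorem eq_zero_of_eval_eq_zero_of_eqCofinite_div_X_pow {A U V : ℂ[X]} {m : ℕ}
    (h : EqCofinite (fun z => A.eval z / z ^ m) fun z => U.eval z / V.eval z) (hV : V ≠ 0)
    (hUV : ∀ z, U.eval z = 0 → V.eval z = 0 → z = 0) {z : ℂ} (hz : V.eval z = 0) : z = 0 := by
  have hAV : A * V = U * X ^ m := eq_of_eqCofinite <| .of_eqOn_compl
    ((h.union (Set.finite_singleton 0)).union (finite_setOfPred_isRoot hV)) fun z hz => by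
      simp only [Set.mem_union, Set.mem_ofPred_eq, Set.mem_singleton_iff, not_or, not_not] at hz
      obtain ⟨⟨hAU, hz0⟩, hVz⟩ := hz
      have hVz : V.eval z ≠ 0 := hVz
      rw [div_eq_div_iff (pow_ne_zero _ hz0) hVz] at hAU
      simp [hAU]
  by_contra hz0
  have hUz := congrArg (eval z) hAV
  simp only [eval_mul, hz, mul_zero, eval_pow, eval_X, zero_eq_mul, pow_eq_zero_iff', hz0,
    false_and, or_false] at hUz
  exact hz0 (hUV z hUz hz)

theorem Polynomial.homogenizeComp_ne_zero {q r s : ℂ[X]} {D : ℕ} (hq : q ≠ 0)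
    (hqD : q.natDegree ≤ D) (hrs : LinearIndependent ℂ ![r, s]) :
    q.homogenizeComp D r s ≠ 0 := by
  obtain ⟨z, hz⟩ := ((finite_setOfPred_isRoot (hrs.ne_zero 1)).union
    (finite_setOf_div_mem hrs (finite_setOfPred_isRoot hq))).infinite_compl.nonempty
  simp only [Set.mem_compl_iff, Set.mem_union, Set.mem_ofPred_eq, not_or, not_and] at hz
  have hsz : s.eval z ≠ 0 := hz.1
  intro h0
  have := congrArg (eval z) h0
  rw [eval_homogenizeComp, eval_homogenize hqD _ hsz, eval_zero] at this
  exact hz.2 hsz ((mul_eq_zero.mp this).resolve_right (pow_ne_zero _ hsz))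

theorem eq_zero_of_eval_homogenize_eq_zero {P g h : ℂ → ℂ} {p q r s : ℂ[X]}
    (hP : ∃ (S : Finset ℤ) (a : ℤ → ℂ), ∀ z : ℂ, z ≠ 0 → P z = ∑ k ∈ S, a k * z ^ k)
    (hcomp : EqCofinite P (g ∘ h)) (hg : EqCofinite g fun z => p.eval z / q.eval z)
    (hh : EqCofinite h fun z => r.eval z / s.eval z) (hpq : IsCoprime p q) (hq : q ≠ 0)
    (hrs : IsCoprime r s) (hli : LinearIndependent ℂ ![r, s]) {z : ℂ}
    (hz : MvPolynomial.eval ![r.eval z, s.eval z]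
      (q.homogenize (max p.natDegree q.natDegree)) = 0) : z = 0 := by
  obtain ⟨A, m, hA⟩ := exists_eqCofinite_div_X_pow hP
  refine eq_zero_of_eval_eq_zero_of_eqCofinite_div_X_pow
    (hA.symm.trans (hcomp.trans (hg.comp_div hh hli (le_max_left _ _) (le_max_right _ _))))
    (homogenizeComp_ne_zero hq (le_max_right _ _) hli) (fun z hU hV => ?_)
    (by rwa [eval_homogenizeComp])
  rw [eval_homogenizeComp] at hU hV
  exact ((eval_homogenize_max_ne_zero_or hpq hq (vec_eval_ne_zero_of_isCoprime hrs z)).elim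
    (· hU) (· hV)).elim

/-- The Möbius map `z ↦ [z v + w]`, sending `∞` to `[v]` and `0` to `[w]`. -/
noncomputable def mobius (v w : Fin 2 → ℂ) (z : ℂ) : ℂ := (v 0 * z + w 0) / (v 1 * z + w 1)

noncomputable def mobiusInv (v w : Fin 2 → ℂ) : ℂ → ℂ := mobius ![w 1, -v 1] ![-w 0, v 0]

theorem isMobius_mobius {v w : Fin 2 → ℂ} (h : cross v w ≠ 0) : IsMobius (mobius v w) :=
  ⟨v 0, w 0, v 1, w 1, by rwa [cross, mul_comm (v 1)] at h, fun _ _ => rfl⟩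

theorem isMobius_mobiusInv {v w : Fin 2 → ℂ} (h : cross v w ≠ 0) : IsMobius (mobiusInv v w) :=
  ⟨w 1, -w 0, -v 1, v 0, by rw [cross] at h; contrapose! h; linear_combination h,
    fun _ _ => rfl⟩

theorem finite_setOf_mul_add_eq_zero {a b : ℂ} (h : a ≠ 0 ∨ b ≠ 0) :
    {z : ℂ | a * z + b = 0}.Finite := by
  refine Set.Subsingleton.finite fun z₁ (hz₁ : a * z₁ + b = 0) z₂ (hz₂ : a * z₂ + b = 0) => ?_
  have hz : a * (z₁ - z₂) = 0 := by linear_combination hz₁ - hz₂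
  rcases mul_eq_zero.mp hz with ha | hz
  · simp_all
  · exact sub_eq_zero.mp hz

theorem mobiusInv_comp_mobius {v w : Fin 2 → ℂ} (h : cross v w ≠ 0) :
    EqCofinite (mobiusInv v w ∘ mobius v w) id := by
  have hvw : v 1 ≠ 0 ∨ w 1 ≠ 0 := by
    by_contra! h'
    simp [cross, h'] at h
  refine .of_eqOn_compl (finite_setOf_mul_add_eq_zero hvw) fun z hz => ?_
  have hz : v 1 * z + w 1 ≠ 0 := hz
  simp only [Function.comp_apply, mobiusInv, mobius, id, Matrix.cons_val_zero,
    Matrix.cons_val_one]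
  have hnum : w 1 * ((v 0 * z + w 0) / (v 1 * z + w 1)) + -w 0 =
      cross v w * z / (v 1 * z + w 1) := by
    rw [mul_div_assoc', div_add' _ _ _ hz, cross]
    ring
  have hden : -v 1 * ((v 0 * z + w 0) / (v 1 * z + w 1)) + v 0 =
      cross v w / (v 1 * z + w 1) := by
    rw [mul_div_assoc', div_add' _ _ _ hz, cross]
    ring
  rw [hnum, hden, div_div_div_cancel_right₀ hz, mul_div_cancel_left₀ _ h]

theorem mobius_comp_mobiusInv {v w : Fin 2 → ℂ} (h : cross v w ≠ 0) :
    EqCofinite (mobius v w ∘ mobiusInv v w) id := by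
  have hinv : mobiusInv ![w 1, -v 1] ![-w 0, v 0] = mobius v w := by
    funext z
    simp [mobiusInv, mobius]
  have h' : cross ![w 1, -v 1] ![-w 0, v 0] ≠ 0 := by
    rw [cross] at h ⊢
    simpa [mul_comm] using h
  have := mobiusInv_comp_mobius h'
  rwa [hinv] at this

theorem eqCofinite_mobius_div (v w : Fin 2 → ℂ) :
    EqCofinite (mobius v w) fun z =>
      (C (v 0) * X + C (w 0)).eval z / (C (v 1) * X + C (w 1)).eval z :=
  .of_eqOn_compl Set.finite_empty fun z _ => by simp [mobius]

theorem linearIndependent_C_mul_X_add_C {v w : Fin 2 → ℂ} (h : cross v w ≠ 0) :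
    LinearIndependent ℂ ![C (v 0) * X + C (w 0), C (v 1) * X + C (w 1)] := by
  refine LinearIndependent.pair_iff.mpr fun a b hab => ?_
  have h₁ := congrArg (coeff · 1) hab
  have h₀ := congrArg (coeff · 0) hab
  simp only [coeff_smul, coeff_add, coeff_C_mul_X, coeff_C, smul_eq_mul, coeff_zero] at h₀ h₁
  norm_num at h₀ h₁
  rw [cross] at h
  constructor
  · exact (mul_eq_zero.mp (show a * (v 0 * w 1 - v 1 * w 0) = 0 by
      linear_combination w 1 * h₁ - v 1 * h₀)).resolve_right h
  · exact (mul_eq_zero.mp (show b * (v 0 * w 1 - v 1 * w 0) = 0 by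
      linear_combination v 0 * h₀ - w 0 * h₁)).resolve_right h

theorem vec_eval_C_mul_X_add_C (v w : Fin 2 → ℂ) (z : ℂ) :
    ![(C (v 0) * X + C (w 0)).eval z, (C (v 1) * X + C (w 1)).eval z] = z • v + w := by
  ext i
  fin_cases i <;> simp <;> ring

theorem isPolyCof_comp_mobius {g : ℂ → ℂ} {p q : ℂ[X]} {D : ℕ}
    (hg : EqCofinite g fun z => p.eval z / q.eval z) (hp : p.natDegree ≤ D)
    (hq : q.natDegree ≤ D) {v w : Fin 2 → ℂ} (h : cross v w ≠ 0)
    (hpoles : ∀ z : ℂ, MvPolynomial.eval (z • v + w) (q.homogenize D) ≠ 0) :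
    IsPolyCof (g ∘ mobius v w) :=
  .of_eqCofinite_div
    (hg.comp_div (eqCofinite_mobius_div v w) (linearIndependent_C_mul_X_add_C h) hp hq)
    fun z => by rw [eval_homogenizeComp, vec_eval_C_mul_X_add_C]; exact hpoles z

theorem isLaurentCof_comp_mobius {g : ℂ → ℂ} {p q : ℂ[X]} {D : ℕ}
    (hg : EqCofinite g fun z => p.eval z / q.eval z) (hp : p.natDegree ≤ D)
    (hq : q.natDegree ≤ D) {v w : Fin 2 → ℂ} (h : cross v w ≠ 0)
    (hpoles : ∀ z : ℂ, MvPolynomial.eval (z • v + w) (q.homogenize D) = 0 → z = 0) :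
    IsLaurentCof (g ∘ mobius v w) :=
  .of_eqCofinite_div
    (hg.comp_div (eqCofinite_mobius_div v w) (linearIndependent_C_mul_X_add_C h) hp hq)
    fun z => by rw [eval_homogenizeComp, vec_eval_C_mul_X_add_C]; exact hpoles z

theorem EqCofinite.mobiusInv_comp {h : ℂ → ℂ} {r s : ℂ[X]}
    (hh : EqCofinite h fun z => r.eval z / s.eval z) (hs : s ≠ 0) (v w : Fin 2 → ℂ) :
    EqCofinite (mobiusInv v w ∘ h) fun z => (fibre r s w).eval z / (-fibre r s v).eval z := by
  refine .of_eqOn_compl (hh.union (finite_setOfPred_isRoot hs)) fun z hz => ?_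
  simp only [Set.mem_union, Set.mem_ofPred_eq, not_or, not_not] at hz
  obtain ⟨hhz, hsz⟩ := hz
  have hsz : s.eval z ≠ 0 := hsz
  simp only [Function.comp_apply, hhz, mobiusInv, mobius, Matrix.cons_val_zero,
    Matrix.cons_val_one, eval_neg, eval_fibre, cross]
  have hnum : w 1 * (r.eval z / s.eval z) + -w 0 =
      (r.eval z * w 1 - s.eval z * w 0) / s.eval z := by
    field_simp
    ring
  have hden : -v 1 * (r.eval z / s.eval z) + v 0 =
      -(r.eval z * v 1 - s.eval z * v 0) / s.eval z := by
    field_simp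
    ring
  rw [hnum, hden, div_div_div_cancel_right₀ hsz]

theorem EqCofinite.mobiusInv_comp_eqCofinite_pow {h : ℂ → ℂ} {r s : ℂ[X]}
    (hh : EqCofinite h fun z => r.eval z / s.eval z) (hs : s ≠ 0) {v w : Fin 2 → ℂ}
    {c : ℂ} {e₁ e₂ : ℕ} (hc : c ≠ 0) (hv : fibre r s v = C c * X ^ e₁)
    (hw : fibre r s w = C (-c) * X ^ e₂) (he : e₁ ≤ e₂) :
    EqCofinite (mobiusInv v w ∘ h) fun z => z ^ (e₂ - e₁) := by
  refine (hh.mobiusInv_comp hs v w).trans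
    (.of_eqOn_compl (Set.finite_singleton 0) fun z hz => ?_)
  rw [Set.mem_singleton_iff] at hz
  have hpow : z ^ e₂ = z ^ e₁ * z ^ (e₂ - e₁) := by rw [← pow_add, Nat.add_sub_cancel' he]
  simp only [hv, hw, eval_neg, eval_mul, eval_C, eval_pow, eval_X, hpow]
  field_simp

theorem exists_polyCof_comp_mobius_of_unique_pole {g h : ℂ → ℂ} {p q r s : ℂ[X]} {D : ℕ}
    (hg : EqCofinite g fun z => p.eval z / q.eval z) (hp : p.natDegree ≤ D)
    (hq : q.natDegree ≤ D) (hh : EqCofinite h fun z => r.eval z / s.eval z) (hs : s ≠ 0)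
    {v : Fin 2 → ℂ} (hv : v ≠ 0) (hfib : IsMonomial (fibre r s v))
    (hpole : ∀ u, MvPolynomial.eval u (q.homogenize D) = 0 → cross v u = 0) :
    ∃ v w, cross v w ≠ 0 ∧ IsPolyCof (g ∘ mobius v w) ∧ IsLaurentCof (mobiusInv v w ∘ h) := by
  obtain ⟨w, hvw⟩ := exists_cross_ne_zero hv
  refine ⟨v, w, hvw, isPolyCof_comp_mobius hg hp hq hvw fun z hz => hvw ?_, ?_⟩
  · have := hpole _ hz
    simp only [cross, Pi.add_apply, Pi.smul_apply, smul_eq_mul] at this ⊢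
    linear_combination this
  · obtain ⟨c, e, hc, hce⟩ := hfib
    refine .of_eqCofinite_div (hh.mobiusInv_comp hs v w) fun z hz => ?_
    exact (by simpa [hce, hc] using hz : z = 0 ∧ e ≠ 0).1

theorem exists_laurentCof_comp_mobius_of_two_poles {g h : ℂ → ℂ} {p q r s : ℂ[X]} {D : ℕ}
    (hg : EqCofinite g fun z => p.eval z / q.eval z) (hp : p.natDegree ≤ D)
    (hq : q.natDegree ≤ D) (hh : EqCofinite h fun z => r.eval z / s.eval z)
    (hrs : LinearIndependent ℂ ![r, s])
    (hfib : ∀ u, u ≠ 0 → MvPolynomial.eval u (q.homogenize D) = 0 → IsMonomial (fibre r s u))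
    {v₁ v₂ : Fin 2 → ℂ} (h₁₂ : cross v₁ v₂ ≠ 0)
    (hv₁ : MvPolynomial.eval v₁ (q.homogenize D) = 0)
    (hv₂ : MvPolynomial.eval v₂ (q.homogenize D) = 0) :
    ∃ v w, cross v w ≠ 0 ∧ IsLaurentCof (g ∘ mobius v w) ∧
      ∃ k : ℕ, 1 ≤ k ∧ EqCofinite (mobiusInv v w ∘ h) fun z => z ^ k := by
  obtain ⟨c₁, e₁, hc₁, hf₁⟩ := hfib v₁ (left_ne_zero_of_cross_ne_zero h₁₂) hv₁
  obtain ⟨c₂, e₂, hc₂, hf₂⟩ := hfib v₂ (right_ne_zero_of_cross_ne_zero h₁₂) hv₂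
  have he := exponent_ne_of_cross_ne_zero hrs h₁₂ hc₁ hf₁ hf₂
  wlog hlt : e₁ < e₂ generalizing v₁ v₂ c₁ c₂ e₁ e₂
  · refine this (v₁ := v₂) (v₂ := v₁) ?_ hv₂ hv₁ c₂ e₂ hc₂ hf₂ c₁ e₁ hc₁ hf₁ he.symm (by omega)
    rwa [cross_swap, neg_ne_zero]
  set t := -c₁ / c₂
  have ht : t ≠ 0 := div_ne_zero (neg_ne_zero.mpr hc₁) hc₂
  have hvw : cross v₁ (t • v₂) ≠ 0 := by
    rw [show cross v₁ (t • v₂) = t * cross v₁ v₂ by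
      simp only [cross, Pi.smul_apply, smul_eq_mul]; ring]
    exact mul_ne_zero ht h₁₂
  refine ⟨v₁, t • v₂, hvw, isLaurentCof_comp_mobius hg hp hq hvw fun z hz => ?_, e₂ - e₁,
    by omega, ?_⟩
  · -- a pole `[z v₁ + t v₂]` of `g` with `z ≠ 0` would have a fibre with two terms
    by_contra hz0
    have hu : cross (z • v₁ + t • v₂) v₂ = z * cross v₁ v₂ := by
      simp only [cross, Pi.add_apply, Pi.smul_apply, smul_eq_mul]
      ring
    obtain ⟨c, e, -, hce⟩ := hfib _ (left_ne_zero_of_cross_ne_zero (v := v₂) (by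
      rw [hu]; exact mul_ne_zero hz0 h₁₂)) hz
    rw [map_add, map_smul, map_smul, hf₁, hf₂, smul_eq_C_mul, smul_eq_C_mul, ← mul_assoc,
      ← mul_assoc, ← C_mul, ← C_mul] at hce
    exact C_mul_X_pow_add_C_mul_X_pow_ne (mul_ne_zero hz0 hc₁) (mul_ne_zero ht hc₂) he hce
  · refine hh.mobiusInv_comp_eqCofinite_pow (hrs.ne_zero 1) hc₁ hf₁ ?_ hlt.le
    rw [map_smul, hf₂, smul_eq_C_mul, ← mul_assoc, ← C_mul, div_mul_cancel₀ _ hc₂]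

theorem exists_isMobius_inverse_pair {v w : Fin 2 → ℂ} (hvw : cross v w ≠ 0)
    {Φ : (ℂ → ℂ) → (ℂ → ℂ) → Prop} (h : Φ (mobius v w) (mobiusInv v w)) :
    ∃ μ ν : ℂ → ℂ, IsMobius μ ∧ IsMobius ν ∧ EqCofinite (ν ∘ μ) id ∧ EqCofinite (μ ∘ ν) id ∧
      Φ μ ν :=
  ⟨mobius v w, mobiusInv v w, isMobius_mobius hvw, isMobius_mobiusInv hvw,
    mobiusInv_comp_mobius hvw, mobius_comp_mobiusInv hvw, h⟩

theorem laurent_decomposition_general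
    (P g h : ℂ → ℂ)
    (hP : ∃ (s : Finset ℤ) (a : ℤ → ℂ), ∀ z : ℂ, z ≠ 0 → P z = ∑ k ∈ s, a k * z ^ k)
    (hg : IsRatFun g) (hh : IsRatFun h)
    (hgnc : ¬ ∃ c : ℂ, EqCofinite g (fun _ => c))
    (hhnc : ¬ ∃ c : ℂ, EqCofinite h (fun _ => c))
    (hcomp : EqCofinite P (g ∘ h)) :
    ∃ μ ν : ℂ → ℂ, IsMobius μ ∧ IsMobius ν ∧
      EqCofinite (ν ∘ μ) id ∧ EqCofinite (μ ∘ ν) id ∧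
      ((IsPolyCof (g ∘ μ) ∧ IsLaurentCof (ν ∘ h)) ∨
       (IsLaurentCof (g ∘ μ) ∧ ∃ k : ℕ, 1 ≤ k ∧ EqCofinite (ν ∘ h) (fun z => z ^ k))) := by
  obtain ⟨p, q, hpq, hq, hgpq⟩ := hg.exists_coprime
  obtain ⟨r, s, hrs, hs, hhrs⟩ := hh.exists_coprime
  have hli := linearIndependent_of_not_eqCofinite_const hs hhrs hhnc
  set D := max p.natDegree q.natDegree
  have hfib : ∀ u, u ≠ 0 → MvPolynomial.eval u (q.homogenize D) = 0 →
      IsMonomial (fibre r s u) :=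
    fun u => isMonomial_fibre hli fun z =>
      eq_zero_of_eval_homogenize_eq_zero hP hcomp hgpq hhrs hpq hq hrs hli
  obtain ⟨v₁, hv₁, hqv₁⟩ := exists_ne_zero_eval_homogenize_eq_zero (le_max_right _ _)
    (pos_max_natDegree_of_not_eqCofinite_const hgpq hgnc)
  by_cases htwo : ∃ v₂, MvPolynomial.eval v₂ (q.homogenize D) = 0 ∧ cross v₁ v₂ ≠ 0
  · obtain ⟨v₂, hqv₂, h₁₂⟩ := htwo
    obtain ⟨v, w, hvw, hG, hH⟩ := exists_laurentCof_comp_mobius_of_two_poles hgpq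
      (le_max_left _ _) (le_max_right _ _) hhrs hli hfib h₁₂ hqv₁ hqv₂
    exact exists_isMobius_inverse_pair hvw (.inr ⟨hG, hH⟩)
  · push Not at htwo
    obtain ⟨v, w, hvw, hG, hH⟩ := exists_polyCof_comp_mobius_of_unique_pole hgpq
      (le_max_left _ _) (le_max_right _ _) hhrs hs hv₁ (hfib v₁ hv₁ hqv₁) htwo
    exact exists_isMobius_inverse_pair hvw (.inl ⟨hG, hH⟩)

/-- Lemma on decompositions of Laurent polynomials.
If a Laurent polynomial `P`, lying neither in `ℂ[z]` nor in `ℂ[z⁻¹]`, factors as `P = g ∘ h`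
with `g, h` nonconstant rational functions, then there is a Möbius transformation `μ`
(with inverse `ν`) such that either `G := g ∘ μ` is a polynomial and `H := ν ∘ h` is a
Laurent polynomial, or `G` is a Laurent polynomial and `H = z^k` for some `k ≥ 1`. -/
theorem laurent_decomposition
    (P g h : ℂ → ℂ)
    (hP : ∃ (s : Finset ℤ) (a : ℤ → ℂ), ∀ z : ℂ, z ≠ 0 → P z = ∑ k ∈ s, a k * z ^ k)
    (hPnotPoly : ¬ ∃ p : Polynomial ℂ, ∀ z : ℂ, z ≠ 0 → P z = p.eval z)
    (hPnotPolyInv : ¬ ∃ p : Polynomial ℂ, ∀ z : ℂ, z ≠ 0 → P z = p.eval z⁻¹)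
    (hg : IsRatFun g) (hh : IsRatFun h)
    (hgnc : ¬ ∃ c : ℂ, EqCofinite g (fun _ => c))
    (hhnc : ¬ ∃ c : ℂ, EqCofinite h (fun _ => c))
    (hcomp : EqCofinite P (g ∘ h)) :
    ∃ μ ν : ℂ → ℂ, IsMobius μ ∧ IsMobius ν ∧
      EqCofinite (ν ∘ μ) id ∧ EqCofinite (μ ∘ ν) id ∧
      ((IsPolyCof (g ∘ μ) ∧ IsLaurentCof (ν ∘ h)) ∨
       (IsLaurentCof (g ∘ μ) ∧ ∃ k : ℕ, 1 ≤ k ∧ EqCofinite (ν ∘ h) (fun z => z ^ k))) :=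
  laurent_decomposition_general P g h hP hg hh hgnc hhnc hcomp
end

section
/- Let n, m ≥ 1 and let G be a transitive subgroup of the symmetric group on {1,…,n+m} containing the permutation σ_∞ = (1,2,…,n)(n+1,n+2,…,n+m). Let ℬ be a non-trivial imprimitivity system of G, and suppose that no block of ℬ meets both {1,…,n} and {n+1,…,n+m} (equivalently, every block is included in or disjoint from {1,…,n}). Then, letting d denote the common cardinality of the blocks of ℬ, d divides gcd(n,m); the blocks contained in {1,…,n} are exactly the congruence classes modulo n/d in {1,…,n} (the sets {i ∈ {1,…,n} : i ≡ j (mod n/d)} for j = 1,…,n/d); and the blocks contained in {n+1,…,n+m} are exactly the congruence classes modulo m/d in {n+1,…,n+m} (the sets {i ∈ {n+1,…,n+m} : i ≡ j (mod m/d)}). -/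
/-!
Every translate `g • B₀` is again a block, hence a block of the cyclic group generated by `σ`.
If it lies in one of the two cycles of `σ`, of length `k`, then reading that cycle as `ZMod k`
turns it into a block `S` of the regular action of `ZMod k`, i.e. a coset of its stabiliser `H`.
Pulled back to `ℤ`, `H` is `eℤ` with `e` its index, so `S` is a residue class modulo `e`, and
`|S| * e = k` gives `e = k / d`. Transitivity puts a translate through every point, which yields
`d ∣ n`, `d ∣ m` and every residue class as a block.
-/

open scoped Pointwise

theorem ZMod.eq_setOf_val_mod_of_isBlock {k : ℕ} [NeZero k] {S : Set (ZMod k)}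
    (hS : AddAction.IsBlock (ZMod k) S) {b : ZMod k} (hb : b ∈ S) :
    S = {x | x.val % (k / S.ncard) = b.val % (k / S.ncard)} := by
  set H := AddAction.stabilizer (ZMod k) S
  obtain ⟨a, ha⟩ := Int.subgroup_cyclic (H.comap (Int.castAddHom (ZMod k)))
  rw [← AddSubgroup.zmultiples_eq_closure, ← Int.zmultiples_natAbs] at ha
  set e := a.natAbs
  have hmem : ∀ z : ℤ, (z : ZMod k) ∈ H ↔ (e : ℤ) ∣ z := fun z => by
    rw [← Int.mem_zmultiples_iff, ← ha]; rfl
  have hcard : S.ncard * e = k := by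
    have hindex : H.index = e := by
      rw [← AddSubgroup.index_comap_of_surjective H (f := Int.castAddHom (ZMod k))
        ZMod.intCast_surjective, ha, Int.index_zmultiples, Int.natAbs_natCast]
    rw [← hindex, AddAction.index_stabilizer, hS.ncard_block_add_ncard_orbit_eq ⟨b, hb⟩,
      Nat.card_zmod]
  rw [Nat.div_eq_of_eq_mul_right ((Set.ncard_pos).mpr ⟨b, hb⟩) hcard.symm]
  conv_lhs => rw [← hS.orbit_stabilizer_eq hb]
  ext x
  have hsub : x - b = (((x.val : ℤ) - b.val : ℤ) : ZMod k) := by simp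
  calc x ∈ AddAction.orbit H b ↔ x - b ∈ H := by
        refine ⟨?_, fun h => ⟨⟨x - b, h⟩, sub_add_cancel x b⟩⟩
        rintro ⟨h, rfl⟩
        simp [AddSubgroup.vadd_def]
    _ ↔ b.val ≡ x.val [MOD e] := by rw [hsub, hmem, Nat.modEq_iff_dvd]
    _ ↔ x ∈ {x : ZMod k | x.val % e = b.val % e} := eq_comm

theorem isBlock_preimage_of_semiconj {X : Type*} {G : Subgroup (Equiv.Perm X)}
    {σ : Equiv.Perm X} (hσG : σ ∈ G) {k : ℕ} [NeZero k] {ι : ZMod k → X}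
    (hι : Function.Semiconj ι (· + 1) σ) {B : Set X} (hB : MulAction.IsBlock G B) :
    AddAction.IsBlock (ZMod k) (ι ⁻¹' B) := by
  rw [AddAction.isBlock_iff_vadd_eq_or_disjoint]
  intro c
  let s : G := ⟨σ, hσG⟩ ^ c.val
  have hshift : c +ᵥ ι ⁻¹' B = ι ⁻¹' (s • B) := by
    ext x
    have hx : ι x = s • ι (-c + x) := by
      simpa only [add_right_iterate, nsmul_one, ZMod.natCast_zmod_val, neg_add_cancel_comm,
        Equiv.Perm.iterate_eq_pow, s, Subgroup.smul_def, SubgroupClass.coe_pow,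
        Equiv.Perm.smul_def] using hι.iterate_right c.val (-c + x)
    rw [Set.mem_vadd_set_iff_neg_vadd_mem, Set.mem_preimage, Set.mem_preimage, hx,
      Set.smul_mem_smul_set_iff, vadd_eq_add]
  rw [hshift]
  rcases MulAction.isBlock_iff_smul_eq_or_disjoint.mp hB s with h | h
  · exact Or.inl (congrArg _ h)
  · exact Or.inr (h.preimage ι)

def finSegment {N : ℕ} (a k : ℕ) : Set (Fin N) := {i | a ≤ i ∧ i < a + k}

def finSegmentClass {N : ℕ} (a k e j : ℕ) : Set (Fin N) :=
  {i | a ≤ i ∧ i < a + k ∧ (i - a) % e = j}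

def finSegmentIncl {N k : ℕ} [NeZero k] (a : ℕ) (hak : a + k ≤ N) (x : ZMod k) : Fin N :=
  ⟨a + x.val, by have := x.val_lt; omega⟩

@[simp] theorem finSegment_zero_left {N k : ℕ} :
    finSegment (N := N) 0 k = {i : Fin N | (i : ℕ) < k} := by
  ext; simp [finSegment]

@[simp] theorem finSegmentClass_zero_left {N k e j : ℕ} :
    finSegmentClass (N := N) 0 k e j = {i : Fin N | (i : ℕ) < k ∧ (i : ℕ) % e = j} := by
  ext; simp [finSegmentClass]

@[simp] theorem finSegment_add {a k : ℕ} :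
    finSegment (N := a + k) a k = {i : Fin (a + k) | a ≤ (i : ℕ)} := by
  ext; simp [finSegment]

@[simp] theorem finSegmentClass_add {a k e j : ℕ} :
    finSegmentClass (N := a + k) a k e j =
      {i : Fin (a + k) | a ≤ (i : ℕ) ∧ ((i : ℕ) - a) % e = j} := by
  ext; simp [finSegmentClass]

section FinSegment

variable {N a k : ℕ} [NeZero k] (hak : a + k ≤ N)

theorem finSegmentIncl_injective : Function.Injective (finSegmentIncl a hak) := fun x y h =>
  ZMod.val_injective k (by simpa [finSegmentIncl] using h)

theorem image_finSegmentIncl_setOf_val (p : ℕ → Prop) :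
    finSegmentIncl a hak '' {x | p x.val} = {i : Fin N | a ≤ i ∧ i < a + k ∧ p (i - a)} := by
  ext i
  constructor
  · rintro ⟨x, hx, rfl⟩
    simpa [finSegmentIncl, ZMod.val_lt] using hx
  · rintro ⟨hai, hik, hp⟩
    have hval : (((i - a : ℕ) : ZMod k)).val = i - a := ZMod.val_natCast_of_lt (by omega)
    refine ⟨_, show p _ from hval ▸ hp, Fin.ext ?_⟩
    simp only [finSegmentIncl, hval]
    omega

theorem range_finSegmentIncl : Set.range (finSegmentIncl a hak) = finSegment a k := by
  simpa [finSegment] using image_finSegmentIncl_setOf_val hak (fun _ => True)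

theorem semiconj_finSegmentIncl {σ : Equiv.Perm (Fin N)}
    (hσ : ∀ i ∈ finSegment a k, (σ i : ℕ) = a + ((i - a + 1) % k)) :
    Function.Semiconj (finSegmentIncl a hak) (· + 1) σ := by
  intro x
  have hx := x.val_lt
  ext
  rw [hσ _ (by simp [finSegment, finSegmentIncl, hx])]
  simp [finSegmentIncl, ZMod.val_add, ZMod.val_one_eq_one_mod]

end FinSegment

variable {N a k : ℕ} [NeZero k] {G : Subgroup (Equiv.Perm (Fin N))} {σ : Equiv.Perm (Fin N)}

theorem exists_eq_finSegmentClass_of_isBlock (hak : a + k ≤ N) (hσG : σ ∈ G)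
    (hσ : ∀ i ∈ finSegment a k, (σ i : ℕ) = a + ((i - a + 1) % k))
    {B : Set (Fin N)} (hB : MulAction.IsBlock G B) (hne : B.Nonempty) (hsub : B ⊆ finSegment a k) :
    B.ncard ∣ k ∧ ∃ j < k / B.ncard, B = finSegmentClass a k (k / B.ncard) j := by
  set ι := finSegmentIncl a hak
  have himage : ι '' (ι ⁻¹' B) = B :=
    Set.image_preimage_eq_of_subset (range_finSegmentIncl hak ▸ hsub)
  have hcard : (ι ⁻¹' B).ncard = B.ncard := by
    conv_rhs => rw [← himage]
    exact (Set.ncard_image_of_injective _ (finSegmentIncl_injective hak)).symm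
  obtain ⟨x, hx⟩ : (ι ⁻¹' B).Nonempty := (himage ▸ hne).of_image
  have hS := isBlock_preimage_of_semiconj hσG (semiconj_finSegmentIncl hak hσ) hB
  have hdvd : B.ncard ∣ k := by
    simpa only [hcard, Nat.card_zmod] using hS.ncard_dvd_card (B := ι ⁻¹' B) ⟨x, hx⟩
  have hpos : 0 < k / B.ncard :=
    Nat.div_pos (Nat.le_of_dvd (NeZero.pos k) hdvd) ((Set.ncard_pos).mpr hne)
  refine ⟨hdvd, x.val % (k / B.ncard), Nat.mod_lt _ hpos, ?_⟩
  conv_lhs => rw [← himage, ZMod.eq_setOf_val_mod_of_isBlock hS hx, hcard]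
  exact image_finSegmentIncl_setOf_val hak (fun v => v % _ = _)

theorem translates_eq_finSegmentClass_of_isBlock (hak : a + k ≤ N) (hσG : σ ∈ G)
    (hσ : ∀ i ∈ finSegment a k, (σ i : ℕ) = a + ((i - a + 1) % k))
    (htrans : ∀ i j : Fin N, ∃ g ∈ G, g i = j)
    {B₀ : Set (Fin N)} (hB₀ : MulAction.IsBlock G B₀) (hne : B₀.Nonempty)
    (hsplit : ∀ g ∈ G, ⇑g '' B₀ ⊆ finSegment a k ∨ Disjoint (⇑g '' B₀) (finSegment a k)) :
    B₀.ncard ∣ k ∧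
    (∀ g ∈ G, ⇑g '' B₀ ⊆ finSegment a k →
      ∃ j < k / B₀.ncard, ⇑g '' B₀ = finSegmentClass a k (k / B₀.ncard) j) ∧
    (∀ j < k / B₀.ncard, ∃ g ∈ G, ⇑g '' B₀ = finSegmentClass a k (k / B₀.ncard) j) := by
  have hclass : ∀ g ∈ G, ⇑g '' B₀ ⊆ finSegment a k → B₀.ncard ∣ k ∧
      ∃ j < k / B₀.ncard, ⇑g '' B₀ = finSegmentClass a k (k / B₀.ncard) j := by
    intro g hg hsub
    have hcard : (⇑g '' B₀).ncard = B₀.ncard := Set.ncard_image_of_injective _ g.injective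
    simpa only [hcard] using exists_eq_finSegmentClass_of_isBlock (B := ⇑g '' B₀) hak hσG hσ
      (hB₀.translate ⟨g, hg⟩) (hne.image g) hsub
  have hcover : ∀ i ∈ finSegment a k, ∃ g ∈ G, i ∈ ⇑g '' B₀ ∧ ⇑g '' B₀ ⊆ finSegment a k := by
    intro i hi
    obtain ⟨b, hb⟩ := hne
    obtain ⟨g, hg, rfl⟩ := htrans b i
    exact ⟨g, hg, ⟨b, hb, rfl⟩,
      (hsplit g hg).resolve_right fun h => Set.disjoint_left.mp h ⟨b, hb, rfl⟩ hi⟩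
  have hk := NeZero.pos k
  obtain ⟨g₀, hg₀, -, hsub₀⟩ := hcover ⟨a, by omega⟩ (by simp [finSegment, hk])
  refine ⟨(hclass g₀ hg₀ hsub₀).1, fun g hg hsub => (hclass g hg hsub).2, fun j hj => ?_⟩
  have hjk : j < k := lt_of_lt_of_le hj (Nat.div_le_self _ _)
  obtain ⟨g, hg, hmem, hsub⟩ := hcover ⟨a + j, by omega⟩ (by simp [finSegment, hjk])
  obtain ⟨-, j', -, heq⟩ := hclass g hg hsub
  refine ⟨g, hg, ?_⟩
  rw [heq] at hmem ⊢
  obtain ⟨-, -, hj'⟩ := hmem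
  simp only [Nat.add_sub_cancel_left, Nat.mod_eq_of_lt hj] at hj'
  rw [hj']

theorem blocks_disjoint_case_general
    (n m : ℕ) (hn : 1 ≤ n) (hm : 1 ≤ m)
    (G : Subgroup (Equiv.Perm (Fin (n + m))))
    (σ : Equiv.Perm (Fin (n + m))) (hσG : σ ∈ G)
    (hσ : ∀ i : Fin (n + m),
      ((σ i : ℕ) = if (i : ℕ) < n then ((i : ℕ) + 1) % n else n + (((i : ℕ) - n + 1) % m)))
    (htrans : ∀ i j : Fin (n + m), ∃ g ∈ G, g i = j)
    (B₀ : Set (Fin (n + m)))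
    (hblock : ∀ g ∈ G, ⇑g '' B₀ = B₀ ∨ Disjoint (⇑g '' B₀) B₀)
    (hB₀big : 1 < B₀.ncard)
    (hsplit : ∀ g ∈ G, ⇑g '' B₀ ⊆ {i : Fin (n + m) | (i : ℕ) < n} ∨
      Disjoint (⇑g '' B₀) {i : Fin (n + m) | (i : ℕ) < n}) :
    B₀.ncard ∣ Nat.gcd n m ∧
    (∀ g ∈ G, ⇑g '' B₀ ⊆ {i : Fin (n + m) | (i : ℕ) < n} →
      ∃ j < n / B₀.ncard,
        ⇑g '' B₀ = {i : Fin (n + m) | (i : ℕ) < n ∧ (i : ℕ) % (n / B₀.ncard) = j}) ∧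
    (∀ j < n / B₀.ncard, ∃ g ∈ G,
        ⇑g '' B₀ = {i : Fin (n + m) | (i : ℕ) < n ∧ (i : ℕ) % (n / B₀.ncard) = j}) ∧
    (∀ g ∈ G, ⇑g '' B₀ ⊆ {i : Fin (n + m) | n ≤ (i : ℕ)} →
      ∃ j < m / B₀.ncard,
        ⇑g '' B₀ = {i : Fin (n + m) | n ≤ (i : ℕ) ∧ ((i : ℕ) - n) % (m / B₀.ncard) = j}) ∧
    (∀ j < m / B₀.ncard, ∃ g ∈ G,
        ⇑g '' B₀ = {i : Fin (n + m) | n ≤ (i : ℕ) ∧ ((i : ℕ) - n) % (m / B₀.ncard) = j}) := by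
  have : NeZero n := ⟨by omega⟩
  have : NeZero m := ⟨by omega⟩
  have hB₀ : MulAction.IsBlock G B₀ :=
    MulAction.isBlock_iff_smul_eq_or_disjoint.mpr fun g => hblock g g.2
  have hne : B₀.Nonempty := Set.nonempty_of_ncard_ne_zero (by omega)
  have hsplit₂ : ∀ g ∈ G,
      ⇑g '' B₀ ⊆ finSegment n m ∨ Disjoint (⇑g '' B₀) (finSegment n m) := by
    have hcompl : finSegment (N := n + m) n m = {i : Fin (n + m) | (i : ℕ) < n}ᶜ := by
      ext; simp
    intro g hg
    rw [hcompl, Set.subset_compl_iff_disjoint_right, Set.disjoint_compl_right_iff_subset]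
    exact (hsplit g hg).symm
  have hrot₁ : ∀ i ∈ finSegment (N := n + m) 0 n, (σ i : ℕ) = 0 + ((i - 0 + 1) % n) := by
    intro i hi
    rw [finSegment_zero_left] at hi
    rw [hσ, if_pos (show (i : ℕ) < n from hi), zero_add, Nat.sub_zero]
  have hrot₂ : ∀ i ∈ finSegment (N := n + m) n m, (σ i : ℕ) = n + ((i - n + 1) % m) := by
    intro i hi
    rw [finSegment_add] at hi
    rw [hσ, if_neg (not_lt.mpr (show n ≤ (i : ℕ) from hi))]
  obtain ⟨hdvd₁, hclass₁, hexists₁⟩ := translates_eq_finSegmentClass_of_isBlock (by omega) hσG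
    hrot₁ htrans hB₀ hne (by simpa only [finSegment_zero_left] using hsplit)
  obtain ⟨hdvd₂, hclass₂, hexists₂⟩ := translates_eq_finSegmentClass_of_isBlock le_rfl hσG
    hrot₂ htrans hB₀ hne hsplit₂
  simp only [finSegment_zero_left, finSegmentClass_zero_left, finSegment_add,
    finSegmentClass_add] at hclass₁ hexists₁ hclass₂ hexists₂
  exact ⟨Nat.dvd_gcd hdvd₁ hdvd₂, hclass₁, hexists₁, hclass₂, hexists₂⟩

/-- Lemma 2(a).
Let `G` be a transitive subgroup of the symmetric group on `{0,…,n+m-1}` (0-indexed version of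
`{1,…,n+m}`) containing `σ_∞ = (0,1,…,n-1)(n,n+1,…,n+m-1)`.  Let `ℬ` be a non-trivial
imprimitivity system (the translates of a block `B₀`), and suppose no block meets both
`{0,…,n-1}` and `{n,…,n+m-1}`.  Then, with `d` the common cardinality of the blocks,
`d ∣ gcd(n,m)`, the blocks contained in the first part are exactly the congruence classes
modulo `n/d` there, and the blocks contained in the second part are exactly the congruence
classes modulo `m/d` there. -/
theorem blocks_disjoint_case
    (n m : ℕ) (hn : 1 ≤ n) (hm : 1 ≤ m)
    (G : Subgroup (Equiv.Perm (Fin (n + m))))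
    (σ : Equiv.Perm (Fin (n + m))) (hσG : σ ∈ G)
    (hσ : ∀ i : Fin (n + m),
      ((σ i : ℕ) = if (i : ℕ) < n then ((i : ℕ) + 1) % n else n + (((i : ℕ) - n + 1) % m)))
    (htrans : ∀ i j : Fin (n + m), ∃ g ∈ G, g i = j)
    (B₀ : Set (Fin (n + m)))
    (hblock : ∀ g ∈ G, ⇑g '' B₀ = B₀ ∨ Disjoint (⇑g '' B₀) B₀)
    (hB₀big : 1 < B₀.ncard) (hB₀ne : B₀ ≠ Set.univ)
    (hsplit : ∀ g ∈ G, ⇑g '' B₀ ⊆ {i : Fin (n + m) | (i : ℕ) < n} ∨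
      Disjoint (⇑g '' B₀) {i : Fin (n + m) | (i : ℕ) < n}) :
    B₀.ncard ∣ Nat.gcd n m ∧
    (∀ g ∈ G, ⇑g '' B₀ ⊆ {i : Fin (n + m) | (i : ℕ) < n} →
      ∃ j < n / B₀.ncard,
        ⇑g '' B₀ = {i : Fin (n + m) | (i : ℕ) < n ∧ (i : ℕ) % (n / B₀.ncard) = j}) ∧
    (∀ j < n / B₀.ncard, ∃ g ∈ G,
        ⇑g '' B₀ = {i : Fin (n + m) | (i : ℕ) < n ∧ (i : ℕ) % (n / B₀.ncard) = j}) ∧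
    (∀ g ∈ G, ⇑g '' B₀ ⊆ {i : Fin (n + m) | n ≤ (i : ℕ)} →
      ∃ j < m / B₀.ncard,
        ⇑g '' B₀ = {i : Fin (n + m) | n ≤ (i : ℕ) ∧ ((i : ℕ) - n) % (m / B₀.ncard) = j}) ∧
    (∀ j < m / B₀.ncard, ∃ g ∈ G,
        ⇑g '' B₀ = {i : Fin (n + m) | n ≤ (i : ℕ) ∧ ((i : ℕ) - n) % (m / B₀.ncard) = j}) :=
  blocks_disjoint_case_general n m hn hm G σ hσG hσ htrans B₀ hblock hB₀big hsplit
end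

section
/- Let n, m ≥ 1 and let G be a transitive subgroup of the symmetric group on {1,…,n+m} containing the permutation σ_∞ = (1,2,…,n)(n+1,n+2,…,n+m). Let ℬ be a non-trivial imprimitivity system of G, and suppose some block of ℬ meets both {1,…,n} and {n+1,…,n+m}. Then every block of ℬ meets both {1,…,n} and {n+1,…,n+m}, and there exist a divisor d of gcd(n,m) and an integer r with 0 ≤ r < d such that every block B ∈ ℬ has the form B = {i ∈ {1,…,n} : i ≡ k_B (mod d)} ∪ {i ∈ {n+1,…,n+m} : i ≡ k_B + r (mod d)} for some integer k_B; that is, B ∩ {1,…,n} is a congruence class modulo d in {1,…,n} and B ∩ {n+1,…,n+m} is a congruence class modulo d in {n+1,…,n+m}. -/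
/-!
Let `B` be a block containing `x₁ < n` and `x₂ ≥ n`, and let `d` be the least period of `B` under
`σ`. Since `σ ^ n` fixes `x₁` and `σ ^ m` fixes `x₂`, both map `B` to itself, so `d ∣ n` and
`d ∣ m`. As `σ` rotates each part transitively, a point `σ ^ t x₁` (or `σ ^ t x₂`) lies in `B` iff
`σ ^ t` maps `B` to itself, iff `d ∣ t`; hence both halves of `B` are residue classes mod `d`.
The translates `σ ^ j B` cover both parts, so every block is one of them, and translating by
`σ ^ j` shifts both residues by `j`, which leaves their difference `r` unchanged.
-/

open Equiv Function MulAction Pointwise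

/-- `σ = (0 1 … n-1)(n n+1 … n+m-1)`, the permutation `σ_∞` of the paper. -/
def IsRotationPair (n m : ℕ) (σ : Perm (Fin (n + m))) : Prop :=
  ∀ i : Fin (n + m),
    (σ i : ℕ) = if (i : ℕ) < n then ((i : ℕ) + 1) % n else n + (((i : ℕ) - n + 1) % m)

namespace IsRotationPair

variable {n m : ℕ} {σ : Perm (Fin (n + m))} {a x : Fin (n + m)}

theorem pow_apply_of_lt (hσ : IsRotationPair n m σ) (ha : (a : ℕ) < n) (j : ℕ) :
    ((σ ^ j) a : ℕ) = ((a : ℕ) + j) % n := by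
  induction j with
  | zero => exact (Nat.mod_eq_of_lt ha).symm
  | succ j ih =>
    have hlt : ((σ ^ j) a : ℕ) < n := ih ▸ Nat.mod_lt _ (by omega)
    rw [pow_succ', Perm.mul_apply, hσ, if_pos hlt, ih, Nat.mod_add_mod, add_assoc]

theorem pow_apply_of_le (hσ : IsRotationPair n m σ) (ha : n ≤ (a : ℕ)) (j : ℕ) :
    ((σ ^ j) a : ℕ) = n + ((a : ℕ) - n + j) % m := by
  induction j with
  | zero =>
    have := a.isLt
    rw [pow_zero, Perm.one_apply, add_zero, Nat.mod_eq_of_lt (by omega)]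
    omega
  | succ j ih =>
    have hle : ¬ ((σ ^ j) a : ℕ) < n := by omega
    rw [pow_succ', Perm.mul_apply, hσ, if_neg hle, ih, Nat.add_sub_cancel_left, Nat.mod_add_mod,
      add_assoc]

theorem pow_apply_eq_of_lt (hσ : IsRotationPair n m σ) (ha : (a : ℕ) < n) (hx : (x : ℕ) < n) :
    (σ ^ ((x : ℕ) + (n - a))) a = x := by
  ext
  rw [hσ.pow_apply_of_lt ha, show (a : ℕ) + ((x : ℕ) + (n - a)) = x + n by omega,
    Nat.add_mod_right, Nat.mod_eq_of_lt hx]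

theorem pow_apply_eq_of_le (hσ : IsRotationPair n m σ) (ha : n ≤ (a : ℕ)) (hx : n ≤ (x : ℕ)) :
    (σ ^ ((x : ℕ) - n + (m - (a - n)))) a = x := by
  have := a.isLt
  have := x.isLt
  ext
  rw [hσ.pow_apply_of_le ha, show (a : ℕ) - n + ((x : ℕ) - n + (m - (a - n))) = x - n + m by omega,
    Nat.add_mod_right, Nat.mod_eq_of_lt (by omega)]
  omega

theorem exists_pow_apply_eq (hσ : IsRotationPair n m σ) {c : Fin (n + m)} (ha : (a : ℕ) < n)
    (hc : n ≤ (c : ℕ)) (x : Fin (n + m)) : ∃ j : ℕ, (σ ^ j) a = x ∨ (σ ^ j) c = x := by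
  by_cases hx : (x : ℕ) < n
  · exact ⟨_, .inl (hσ.pow_apply_eq_of_lt ha hx)⟩
  · exact ⟨_, .inr (hσ.pow_apply_eq_of_le hc (not_lt.1 hx))⟩

end IsRotationPair

theorem Nat.dvd_add_sub_iff_modEq {d n a x : ℕ} (hd : d ∣ n) (ha : a ≤ n) :
    d ∣ x + (n - a) ↔ x ≡ a [MOD d] := by
  have hxn : x + n ≡ x [MOD d] := by
    rw [add_comm]; exact Nat.add_modEq_right_iff.2 hd
  have hsum : x + (n - a) + a = x + n := by omega
  rw [← Nat.modEq_zero_iff_dvd]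
  constructor
  · intro h
    have := h.add_right a
    rw [hsum, zero_add] at this
    exact hxn.symm.trans this
  · intro h
    refine Nat.ModEq.add_right_cancel' a ?_
    rw [hsum, zero_add]
    exact hxn.trans h

section Blocks

variable {α : Type*} {G : Subgroup (Perm α)} {σ : Perm α} {C : Set α}

theorem isPeriodicPt_image_iff {t : ℕ} : IsPeriodicPt (Set.image σ) t C ↔ ⇑(σ ^ t) '' C = C := by
  rw [IsPeriodicPt, IsFixedPt, ← Set.image_iterate_eq, Perm.iterate_eq_pow]

theorem isBlock_of_image_eq_or_disjoint (h : ∀ g ∈ G, ⇑g '' C = C ∨ Disjoint (⇑g '' C) C) :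
    IsBlock G C :=
  isBlock_iff_smul_eq_or_disjoint.2 fun g => h g g.2

theorem MulAction.IsBlock.image_eq_image_of_mem (hC : IsBlock G C) {g h : Perm α} (hg : g ∈ G)
    (hh : h ∈ G) {x : α} (hxg : x ∈ ⇑g '' C) (hxh : x ∈ ⇑h '' C) : ⇑g '' C = ⇑h '' C :=
  hC.smul_eq_smul_of_nonempty (g₁ := ⟨g, hg⟩) (g₂ := ⟨h, hh⟩) ⟨x, hxg, hxh⟩

theorem MulAction.IsBlock.pow_apply_mem_iff (hC : IsBlock G C) (hσG : σ ∈ G) {a : α} (ha : a ∈ C)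
    (t : ℕ) : (σ ^ t) a ∈ C ↔ minimalPeriod (Set.image σ) C ∣ t := by
  rw [← isPeriodicPt_iff_minimalPeriod_dvd, isPeriodicPt_image_iff]
  exact ⟨hC.smul_eq_of_mem (g := ⟨σ ^ t, pow_mem hσG t⟩) ha, fun h => h ▸ Set.mem_image_of_mem _ ha⟩

end Blocks

def congrBlock (n m d k l : ℕ) : Set (Fin (n + m)) :=
  {i | ((i : ℕ) < n ∧ (i : ℕ) ≡ k [MOD d]) ∨ (n ≤ (i : ℕ) ∧ (i : ℕ) - n ≡ l [MOD d])}

theorem congrBlock_congr {n m d k k' l l' : ℕ} (hk : k ≡ k' [MOD d]) (hl : l ≡ l' [MOD d]) :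
    congrBlock n m d k l = congrBlock n m d k' l' := by
  ext i
  exact or_congr (and_congr_right fun _ => ⟨fun h => h.trans hk, fun h => h.trans hk.symm⟩)
    (and_congr_right fun _ => ⟨fun h => h.trans hl, fun h => h.trans hl.symm⟩)

namespace MulAction.IsBlock

variable {n m : ℕ} {G : Subgroup (Perm (Fin (n + m)))} {σ : Perm (Fin (n + m))}
  {C : Set (Fin (n + m))} {a c x : Fin (n + m)}

theorem minimalPeriod_dvd_left (hC : IsBlock G C) (hσG : σ ∈ G) (hσ : IsRotationPair n m σ)
    (ha : a ∈ C) (ha' : (a : ℕ) < n) : minimalPeriod (Set.image σ) C ∣ n := by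
  have h := hσ.pow_apply_eq_of_lt ha' ha'
  rw [Nat.add_sub_cancel' ha'.le] at h
  exact (hC.pow_apply_mem_iff hσG ha n).1 (by rw [h]; exact ha)

theorem minimalPeriod_dvd_right (hC : IsBlock G C) (hσG : σ ∈ G) (hσ : IsRotationPair n m σ)
    (hc : c ∈ C) (hc' : n ≤ (c : ℕ)) : minimalPeriod (Set.image σ) C ∣ m := by
  have h := hσ.pow_apply_eq_of_le hc' hc'
  rw [Nat.add_sub_cancel' (by omega)] at h
  exact (hC.pow_apply_mem_iff hσG hc m).1 (by rw [h]; exact hc)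

theorem mem_iff_modEq_of_lt (hC : IsBlock G C) (hσG : σ ∈ G) (hσ : IsRotationPair n m σ)
    (ha : a ∈ C) (ha' : (a : ℕ) < n) (hx : (x : ℕ) < n) :
    x ∈ C ↔ (x : ℕ) ≡ a [MOD minimalPeriod (Set.image σ) C] := by
  rw [← Nat.dvd_add_sub_iff_modEq (hC.minimalPeriod_dvd_left hσG hσ ha ha') ha'.le,
    ← hC.pow_apply_mem_iff hσG ha, hσ.pow_apply_eq_of_lt ha' hx]

theorem mem_iff_modEq_of_le (hC : IsBlock G C) (hσG : σ ∈ G) (hσ : IsRotationPair n m σ)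
    (hc : c ∈ C) (hc' : n ≤ (c : ℕ)) (hx : n ≤ (x : ℕ)) :
    x ∈ C ↔ (x : ℕ) - n ≡ c - n [MOD minimalPeriod (Set.image σ) C] := by
  rw [← Nat.dvd_add_sub_iff_modEq (hC.minimalPeriod_dvd_right hσG hσ hc hc') (by omega),
    ← hC.pow_apply_mem_iff hσG hc, hσ.pow_apply_eq_of_le hc' hx]

theorem eq_congrBlock (hC : IsBlock G C) (hσG : σ ∈ G) (hσ : IsRotationPair n m σ)
    (ha : a ∈ C) (ha' : (a : ℕ) < n) (hc : c ∈ C) (hc' : n ≤ (c : ℕ)) :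
    C = congrBlock n m (minimalPeriod (Set.image σ) C) a (c - n) := by
  ext x
  by_cases hx : (x : ℕ) < n
  · simp only [congrBlock, Set.mem_ofPred_eq, hx, true_and, not_le.2 hx, false_and, or_false,
      hC.mem_iff_modEq_of_lt hσG hσ ha ha' hx]
  · simp only [congrBlock, Set.mem_ofPred_eq, hx, false_and, not_lt.1 hx, true_and, false_or,
      hC.mem_iff_modEq_of_le hσG hσ hc hc' (not_lt.1 hx)]

theorem image_pow_eq_congrBlock (hC : IsBlock G C) (hσG : σ ∈ G) (hσ : IsRotationPair n m σ)
    (ha : a ∈ C) (ha' : (a : ℕ) < n) (hc : c ∈ C) (hc' : n ≤ (c : ℕ)) (j : ℕ) :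
    ⇑(σ ^ j) '' C = congrBlock n m (minimalPeriod (Set.image σ) C) (a + j) (c - n + j) := by
  have hdn := hC.minimalPeriod_dvd_left hσG hσ ha ha'
  have hdm := hC.minimalPeriod_dvd_right hσG hσ hc hc'
  have hperiodic : C ∈ periodicPts (Set.image σ) :=
    mk_mem_periodicPts (by omega) (isPeriodicPt_iff_minimalPeriod_dvd.2 hdn)
  have hperiod : minimalPeriod (Set.image σ) (⇑(σ ^ j) '' C) = minimalPeriod (Set.image σ) C := by
    rw [← Perm.iterate_eq_pow, Set.image_iterate_eq]
    exact minimalPeriod_apply_iterate hperiodic j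
  have hCj : IsBlock G (⇑(σ ^ j) '' C) := hC.translate (⟨σ ^ j, pow_mem hσG j⟩ : G)
  have ha'j := hσ.pow_apply_of_lt ha' j
  have hc'j := hσ.pow_apply_of_le hc' j
  rw [hCj.eq_congrBlock hσG hσ (Set.mem_image_of_mem _ ha) (ha'j ▸ Nat.mod_lt _ (by omega))
    (Set.mem_image_of_mem _ hc) (by omega), hperiod, ha'j, hc'j, Nat.add_sub_cancel_left]
  exact congrBlock_congr ((Nat.mod_modEq _ _).of_dvd hdn) ((Nat.mod_modEq _ _).of_dvd hdm)

theorem exists_image_eq_image_pow {B₀ : Set (Fin (n + m))} (hB₀ : IsBlock G B₀) (hσG : σ ∈ G)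
    (hσ : IsRotationPair n m σ) {g₀ g : Perm (Fin (n + m))} (hg₀ : g₀ ∈ G) (hg : g ∈ G)
    (ha : a ∈ ⇑g₀ '' B₀) (ha' : (a : ℕ) < n) (hc : c ∈ ⇑g₀ '' B₀) (hc' : n ≤ (c : ℕ)) :
    ∃ j : ℕ, ⇑g '' B₀ = ⇑(σ ^ j) '' (⇑g₀ '' B₀) := by
  obtain ⟨y, hy⟩ := Set.image_nonempty.1 ⟨a, ha⟩
  obtain ⟨j, hj⟩ := hσ.exists_pow_apply_eq ha' hc' (g y)
  refine ⟨j, ?_⟩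
  rw [← Set.image_comp, ← Perm.coe_mul]
  refine hB₀.image_eq_image_of_mem hg (mul_mem (pow_mem hσG j) hg₀) (Set.mem_image_of_mem g hy) ?_
  rw [Perm.coe_mul, Set.image_comp]
  rcases hj with hj | hj
  · exact hj ▸ Set.mem_image_of_mem _ ha
  · exact hj ▸ Set.mem_image_of_mem _ hc

end MulAction.IsBlock

theorem blocks_mixed_case_general
    (n m : ℕ)
    (G : Subgroup (Equiv.Perm (Fin (n + m))))
    (σ : Equiv.Perm (Fin (n + m))) (hσG : σ ∈ G)
    (hσ : ∀ i : Fin (n + m),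
      ((σ i : ℕ) = if (i : ℕ) < n then ((i : ℕ) + 1) % n else n + (((i : ℕ) - n + 1) % m)))
    (B₀ : Set (Fin (n + m)))
    (hblock : ∀ g ∈ G, ⇑g '' B₀ = B₀ ∨ Disjoint (⇑g '' B₀) B₀)
    (hmeet : ∃ g ∈ G, (⇑g '' B₀ ∩ {i : Fin (n + m) | (i : ℕ) < n}).Nonempty ∧
      (⇑g '' B₀ ∩ {i : Fin (n + m) | n ≤ (i : ℕ)}).Nonempty) :
    (∀ g ∈ G, (⇑g '' B₀ ∩ {i : Fin (n + m) | (i : ℕ) < n}).Nonempty ∧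
      (⇑g '' B₀ ∩ {i : Fin (n + m) | n ≤ (i : ℕ)}).Nonempty) ∧
    ∃ d r : ℕ, d ∣ Nat.gcd n m ∧ r < d ∧
      ∀ g ∈ G, ∃ k : ℕ,
        ⇑g '' B₀ = {i : Fin (n + m) |
          ((i : ℕ) < n ∧ (i : ℕ) % d = k % d) ∨
          (n ≤ (i : ℕ) ∧ ((i : ℕ) - n) % d = (k + r) % d)} := by
  obtain ⟨g₀, hg₀, ⟨x₁, hx₁B, hx₁ : (x₁ : ℕ) < n⟩, ⟨x₂, hx₂B, hx₂ : n ≤ (x₂ : ℕ)⟩⟩ := hmeet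
  replace hσ : IsRotationPair n m σ := hσ
  have hB₀ : IsBlock G B₀ := isBlock_of_image_eq_or_disjoint hblock
  have hB : IsBlock G (⇑g₀ '' B₀) := hB₀.translate (⟨g₀, hg₀⟩ : G)
  set d := minimalPeriod (Set.image σ) (⇑g₀ '' B₀)
  have hdn : d ∣ n := hB.minimalPeriod_dvd_left hσG hσ hx₁B hx₁
  have hdm : d ∣ m := hB.minimalPeriod_dvd_right hσG hσ hx₂B hx₂
  have htranslate (g) (hg : g ∈ G) : ∃ j : ℕ, ⇑g '' B₀ = ⇑(σ ^ j) '' (⇑g₀ '' B₀) :=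
    hB₀.exists_image_eq_image_pow hσG hσ hg₀ hg hx₁B hx₁ hx₂B hx₂
  refine ⟨fun g hg => ?_, d, (x₂ - n + (n - x₁)) % d, Nat.dvd_gcd hdn hdm,
    Nat.mod_lt _ (Nat.pos_of_dvd_of_pos hdn (by omega)), fun g hg => ?_⟩
  · obtain ⟨j, hj⟩ := htranslate g hg
    rw [hj]
    refine ⟨⟨_, Set.mem_image_of_mem _ hx₁B, ?_⟩, ⟨_, Set.mem_image_of_mem _ hx₂B, ?_⟩⟩
    · exact (hσ.pow_apply_of_lt hx₁ j).trans_lt (Nat.mod_lt _ (by omega))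
    · exact le_of_le_of_eq (Nat.le_add_right _ _) (hσ.pow_apply_of_le hx₂ j).symm
  · obtain ⟨j, hj⟩ := htranslate g hg
    have hr : (x₂ : ℕ) - n + j ≡ x₁ + j + (x₂ - n + (n - x₁)) % d [MOD d] :=
      calc (x₂ : ℕ) - n + j ≡ n + (x₂ - n + j) [MOD d] := (Nat.add_modEq_right_iff.2 hdn).symm
        _ = x₁ + j + (x₂ - n + (n - x₁)) := by omega
        _ ≡ x₁ + j + (x₂ - n + (n - x₁)) % d [MOD d] := ((Nat.mod_modEq _ d).add_left _).symm
    exact ⟨x₁ + j, hj.trans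
      ((hB.image_pow_eq_congrBlock hσG hσ hx₁B hx₁ hx₂B hx₂ j).trans (congrBlock_congr rfl hr))⟩

/-- Lemma 2(b).
Let `G` be a transitive subgroup of the symmetric group on `{0,…,n+m-1}` (0-indexed version of
`{1,…,n+m}`) containing `σ_∞ = (0,1,…,n-1)(n,n+1,…,n+m-1)`.  Let `ℬ` be a non-trivial
imprimitivity system (the translates of a block `B₀`), and suppose some block meets both
`{0,…,n-1}` and `{n,…,n+m-1}`.  Then every block meets both parts, and there exist
`d ∣ gcd(n,m)` and `0 ≤ r < d` such that every block is of the form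
`{i < n : i ≡ k_B (mod d)} ∪ {i ≥ n : i - n ≡ k_B + r (mod d)}` for some `k_B`. -/
theorem blocks_mixed_case
    (n m : ℕ) (hn : 1 ≤ n) (hm : 1 ≤ m)
    (G : Subgroup (Equiv.Perm (Fin (n + m))))
    (σ : Equiv.Perm (Fin (n + m))) (hσG : σ ∈ G)
    (hσ : ∀ i : Fin (n + m),
      ((σ i : ℕ) = if (i : ℕ) < n then ((i : ℕ) + 1) % n else n + (((i : ℕ) - n + 1) % m)))
    (htrans : ∀ i j : Fin (n + m), ∃ g ∈ G, g i = j)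
    (B₀ : Set (Fin (n + m)))
    (hblock : ∀ g ∈ G, ⇑g '' B₀ = B₀ ∨ Disjoint (⇑g '' B₀) B₀)
    (hB₀big : 1 < B₀.ncard) (hB₀ne : B₀ ≠ Set.univ)
    (hmeet : ∃ g ∈ G, (⇑g '' B₀ ∩ {i : Fin (n + m) | (i : ℕ) < n}).Nonempty ∧
      (⇑g '' B₀ ∩ {i : Fin (n + m) | n ≤ (i : ℕ)}).Nonempty) :
    (∀ g ∈ G, (⇑g '' B₀ ∩ {i : Fin (n + m) | (i : ℕ) < n}).Nonempty ∧
      (⇑g '' B₀ ∩ {i : Fin (n + m) | n ≤ (i : ℕ)}).Nonempty) ∧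
    ∃ d r : ℕ, d ∣ Nat.gcd n m ∧ r < d ∧
      ∀ g ∈ G, ∃ k : ℕ,
        ⇑g '' B₀ = {i : Fin (n + m) |
          ((i : ℕ) < n ∧ (i : ℕ) % d = k % d) ∨
          (n ≤ (i : ℕ) ∧ ((i : ℕ) - n) % d = (k + r) % d)} :=
  blocks_mixed_case_general n m G σ hσG hσ B₀ hblock hmeet
end

section
/- Let P, Q ∈ ℂ[z,z⁻¹] be Laurent polynomials and let M = max_{|z|=1} |P(z)|. Then the following are equivalent: (1) ∮_{|z|=1} P(z)^k Q'(z) dz = 0 for every integer k ≥ 0; (2) ∮_{|z|=1} Q(z) P'(z)/(P(z) − t) dz = 0 for every t ∈ ℂ with |t| > M. -/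
/-!
Integrating the derivative of `P ^ (k + 1) * Q` over the circle gives
`∮ P ^ (k + 1) Q' = -(k + 1) ∮ P ^ k Q P'`, and `∮ Q' = 0`, so (1) says that all moments
`∮ P ^ k Q P'` vanish. For `|t| > M` the expansion `1 / (t - P) = ∑ P ^ k / t ^ (k + 1)` converges
uniformly on the circle, so `∮ Q P' / (t - P) = ∑ (∮ P ^ k Q P') / t ^ (k + 1)`, a power series in
`1 / t`; it vanishes for all large `|t|` iff all its coefficients do.
-/

open Complex Metric Set Filter
open scoped NNReal

section CircleIntegral

variable {c : ℂ} {R : ℝ}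

theorem circleIntegral_mul_deriv_eq_neg {f f' g g' : ℂ → ℂ}
    (hf : ∀ z ∈ sphere c |R|, HasDerivAt f (f' z) z)
    (hg : ∀ z ∈ sphere c |R|, HasDerivAt g (g' z) z)
    (hf' : ContinuousOn f' (sphere c |R|)) (hg' : ContinuousOn g' (sphere c |R|)) :
    (∮ z in C(c, R), f z * g' z) = -∮ z in C(c, R), f' z * g z := by
  have hfc : ContinuousOn f (sphere c |R|) := fun z hz =>
    (hf z hz).continuousAt.continuousWithinAt
  have hgc : ContinuousOn g (sphere c |R|) := fun z hz =>
    (hg z hz).continuousAt.continuousWithinAt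
  have hprod : (∮ z in C(c, R), (f' z * g z + f z * g' z)) = 0 :=
    circleIntegral.integral_eq_zero_of_hasDerivWithinAt' fun z hz =>
      ((hf z hz).mul (hg z hz)).hasDerivWithinAt
  rw [circleIntegral.integral_add (f := fun z => f' z * g z) (g := fun z => f z * g' z)
    (hf'.mul hgc).circleIntegrable'
    (hfc.mul hg').circleIntegrable'] at hprod
  exact eq_neg_of_add_eq_zero_right hprod

theorem circleIntegral_pow_succ_mul_deriv {P Q : ℂ → ℂ} {U : Set ℂ} (hU : IsOpen U)
    (hP : DifferentiableOn ℂ P U) (hQ : DifferentiableOn ℂ Q U) (hsU : sphere c |R| ⊆ U)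
    (k : ℕ) :
    (∮ z in C(c, R), P z ^ (k + 1) * deriv Q z) =
      -((k + 1) * ∮ z in C(c, R), P z ^ k * (Q z * deriv P z)) := by
  have hPk : ∀ z ∈ sphere c |R|,
      HasDerivAt (fun z => P z ^ (k + 1)) ((k + 1) * P z ^ k * deriv P z) z := fun z hz => by
    simpa using (hP.hasDerivAt (hU.mem_nhds (hsU hz))).fun_pow (k + 1)
  have hPk' : ContinuousOn (fun z => (k + 1) * P z ^ k * deriv P z) (sphere c |R|) :=
    ((continuousOn_const.mul (hP.continuousOn.pow k)).mul (hP.deriv hU).continuousOn).mono hsU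
  rw [circleIntegral_mul_deriv_eq_neg hPk (fun z hz => hQ.hasDerivAt (hU.mem_nhds (hsU hz))) hPk'
    ((hQ.deriv hU).continuousOn.mono hsU), ← circleIntegral.integral_const_mul]
  congr 2 with z
  ring

theorem forall_circleIntegral_pow_mul_deriv_eq_zero_iff {P Q : ℂ → ℂ} {U : Set ℂ} (hU : IsOpen U)
    (hP : DifferentiableOn ℂ P U) (hQ : DifferentiableOn ℂ Q U) (hsU : sphere c |R| ⊆ U) :
    (∀ k : ℕ, (∮ z in C(c, R), P z ^ k * deriv Q z) = 0) ↔
      ∀ k : ℕ, (∮ z in C(c, R), P z ^ k * (Q z * deriv P z)) = 0 := by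
  have hQ0 : (∮ z in C(c, R), P z ^ 0 * deriv Q z) = 0 := by
    simpa using circleIntegral.integral_eq_zero_of_hasDerivWithinAt' fun z hz =>
      (hQ.hasDerivAt (hU.mem_nhds (hsU hz))).hasDerivWithinAt
  refine ⟨fun h k => ?_, fun h k => ?_⟩
  · simpa [circleIntegral_pow_succ_mul_deriv hU hP hQ hsU, Nat.cast_add_one_ne_zero] using
      h (k + 1)
  · cases k with
    | zero => exact hQ0
    | succ k => simp [circleIntegral_pow_succ_mul_deriv hU hP hQ hsU, h k]

theorem circleIntegral_div_const (f : ℂ → ℂ) (a : ℂ) :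
    (∮ z in C(c, R), f z / a) = (∮ z in C(c, R), f z) / a := by
  simp only [div_eq_inv_mul, circleIntegral.integral_const_mul]

theorem hasSum_circleIntegral_pow_mul_div {f h : ℂ → ℂ} {M : ℝ} {t : ℂ}
    (hf : CircleIntegrable f c R) (hh : ContinuousOn h (sphere c |R|))
    (hM : ∀ z ∈ sphere c |R|, ‖h z‖ ≤ M) (ht : M < ‖t‖) :
    HasSum (fun n : ℕ => (∮ z in C(c, R), h z ^ n * f z) / t ^ (n + 1))
      (∮ z in C(c, R), f z / (t - h z)) := by
  have hM0 : 0 ≤ M := (norm_nonneg _).trans (hM (c + |R|) (by simp))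
  have ht0 : 0 < ‖t‖ := hM0.trans_lt ht
  have hq : M / ‖t‖ ∈ Ico (0 : ℝ) 1 := ⟨div_nonneg hM0 ht0.le, (div_lt_one ht0).2 ht⟩
  simp only [← circleIntegral_div_const]
  refine intervalIntegral.hasSum_integral_of_dominated_convergence
      (fun n θ => ‖f (circleMap c R θ)‖ * (|R| / ‖t‖ * (M / ‖t‖) ^ n))
      (fun n => ?_) (fun n => ?_) ?_ ?_ ?_
  · have hcont : Continuous fun θ => h (circleMap c R θ) :=
      hh.comp_continuous (continuous_circleMap c R) (circleMap_mem_sphere' c R)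
    simp only [deriv_circleMap, div_eq_mul_inv]
    exact ((continuous_circleMap 0 R).mul_const I).aestronglyMeasurable.smul
      (((hcont.pow n).aestronglyMeasurable.mul hf.def'.aestronglyMeasurable).mul_const _)
  · refine Eventually.of_forall fun θ _ => ?_
    have hθ := hM _ (circleMap_mem_sphere' c R θ)
    calc _ = |R| * (‖h (circleMap c R θ)‖ ^ n * ‖f (circleMap c R θ)‖ / ‖t‖ ^ (n + 1)) := by
          simp [deriv_circleMap]
      _ ≤ |R| * (M ^ n * ‖f (circleMap c R θ)‖ / ‖t‖ ^ (n + 1)) := by gcongr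
      _ = _ := by rw [div_pow, pow_succ]; field_simp
  · exact Eventually.of_forall fun _ _ =>
      ((summable_geometric_of_lt_one hq.1 hq.2).mul_left _).mul_left _
  · simpa only [tsum_mul_left, tsum_geometric_of_lt_one hq.1 hq.2] using
      hf.norm.mul_continuousOn continuousOn_const
  · refine Eventually.of_forall fun θ _ => HasSum.const_smul _ ?_
    set w := circleMap c R θ
    have hw : ‖h w‖ < ‖t‖ := (hM _ (circleMap_mem_sphere' c R θ)).trans_lt ht
    have ht' : t ≠ 0 := norm_pos_iff.mp ht0
    have hsub : t - h w ≠ 0 := sub_ne_zero.2 fun e => hw.ne (by rw [e])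
    have hθ : ‖h w / t‖ < 1 := by rwa [norm_div, div_lt_one ht0]
    have hterm : (fun n : ℕ => h w ^ n * f w / t ^ (n + 1)) =
        fun n => f w / t * (h w / t) ^ n := by
      ext n
      rw [div_pow, pow_succ]
      ring
    have hlim : f w / (t - h w) = f w / t * (1 - h w / t)⁻¹ := by
      field_simp
    simpa only [hterm, hlim] using (hasSum_geometric_of_norm_lt_one hθ).mul_left (f w / t)

theorem eq_zero_of_hasSum_div_pow_succ {a : ℕ → ℂ} {M : ℝ}
    (h : ∀ t : ℂ, M < ‖t‖ → HasSum (fun n => a n / t ^ (n + 1)) 0) : a = 0 := by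
  -- Shifting makes `∑ b n * y ^ n` equal `∑ a n / t ^ (n + 1)` at `y = 1 / t` and `0` at `y = 0`,
  -- so it vanishes on a whole ball around `0`.
  set b : ℕ → ℂ := fun n => if n = 0 then 0 else a (n - 1)
  set ρ : ℝ := (|M| + 1)⁻¹
  have hρ : 0 < ρ := by positivity
  have hb : ∀ y : ℂ, ‖y‖ ≤ ρ → HasSum (fun n => b n * y ^ n) 0 := by
    intro y hy
    rw [← hasSum_nat_add_iff' 1]
    simp only [b, Nat.add_eq_zero_iff, one_ne_zero, and_false, if_false, Nat.add_sub_cancel,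
      Finset.sum_range_one, if_true, zero_mul, sub_zero]
    rcases eq_or_ne y 0 with rfl | hy0
    · simp
    · have hMy : M < ‖y⁻¹‖ := by
        rw [norm_inv]
        have := (le_inv_comm₀ (norm_pos_iff.2 hy0) (by positivity)).1 hy
        linarith [le_abs_self M]
      simpa [div_eq_mul_inv, inv_inv] using h y⁻¹ hMy
  obtain ⟨r, hr⟩ : ∃ r : ℝ≥0, (r : ℝ) = ρ := ⟨⟨ρ, hρ.le⟩, rfl⟩
  set p := FormalMultilinearSeries.ofScalars ℂ b
  have hp : HasFPowerSeriesOnBall 0 p 0 r :=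
    { r_le := p.le_radius_of_tendsto (l := 0) <| by
        simpa [p, FormalMultilinearSeries.ofScalars_norm, hr, abs_of_pos hρ] using
          (hb r (by simp [hr, abs_of_pos hρ])).summable.tendsto_atTop_zero.norm
      r_pos := by simpa [← NNReal.coe_pos, hr] using hρ
      hasSum := fun {y} hy => by
        rw [Metric.eball_coe, mem_ball_zero_iff] at hy
        simpa [p, FormalMultilinearSeries.ofScalars_apply_eq, mul_comm] using
          hb y (hr ▸ hy.le) }
  funext n
  have hpn := congrArg (fun q : FormalMultilinearSeries ℂ ℂ ℂ => q (n + 1))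
    hp.hasFPowerSeriesAt.eq_zero
  simpa [b] using (FormalMultilinearSeries.ofScalars_eq_zero ℂ (n + 1)).mp hpn

theorem forall_circleIntegral_pow_mul_eq_zero_iff {f h : ℂ → ℂ} {M : ℝ}
    (hf : CircleIntegrable f c R) (hh : ContinuousOn h (sphere c |R|))
    (hM : ∀ z ∈ sphere c |R|, ‖h z‖ ≤ M) :
    (∀ n : ℕ, (∮ z in C(c, R), h z ^ n * f z) = 0) ↔
      ∀ t : ℂ, M < ‖t‖ → (∮ z in C(c, R), f z / (h z - t)) = 0 := by
  have hneg (t : ℂ) :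
      (∮ z in C(c, R), f z / (h z - t)) = -∮ z in C(c, R), f z / (t - h z) := by
    rw [← neg_one_mul, ← circleIntegral.integral_const_mul]
    simp_rw [neg_one_mul, ← div_neg, neg_sub]
  refine ⟨fun h0 t ht => ?_, fun h0 => congr_fun <| eq_zero_of_hasSum_div_pow_succ (M := M)
    fun t ht => ?_⟩
  · have hsum := hasSum_circleIntegral_pow_mul_div hf hh hM ht
    simp only [h0, zero_div] at hsum
    rw [hneg, ← hasSum_zero.unique hsum, neg_zero]
  · have h0t := h0 t ht
    rw [hneg, neg_eq_zero] at h0t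
    exact h0t ▸ hasSum_circleIntegral_pow_mul_div hf hh hM ht

end CircleIntegral

theorem differentiableOn_sum_mul_zpow (s : Finset ℤ) (a : ℤ → ℂ) :
    DifferentiableOn ℂ (fun z : ℂ => ∑ k ∈ s, a k * z ^ k) {0}ᶜ := fun _ hz =>
  (DifferentiableAt.fun_sum fun k _ =>
    (differentiableAt_zpow.2 (Or.inl hz)).const_mul (a k)).differentiableWithinAt

/-- Proposition, equivalence (1) ⇔ (3).
For Laurent polynomials `P, Q` (given by their coefficients `a, b` supported on `sP, sQ`)
and `M = max_{|z|=1} |P(z)|`, the vanishing of all moments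
`∮_{|z|=1} P(z)^k Q'(z) dz = 0`, `k ≥ 0`, is equivalent to
`∮_{|z|=1} Q(z) P'(z)/(P(z) - t) dz = 0` for all `t` with `|t| > M`. -/
theorem moments_iff_abelian_integral
    (sP sQ : Finset ℤ) (a b : ℤ → ℂ)
    (P : ℂ → ℂ) (hP : P = fun z => ∑ k ∈ sP, a k * z ^ k)
    (Q : ℂ → ℂ) (hQ : Q = fun z => ∑ k ∈ sQ, b k * z ^ k)
    (M : ℝ) (hM : M = sSup ((fun z => ‖P z‖) '' Metric.sphere (0 : ℂ) 1)) :
    (∀ k : ℕ, (∮ z in C(0, 1), P z ^ k * deriv Q z) = 0) ↔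
    (∀ t : ℂ, M < ‖t‖ → (∮ z in C(0, 1), Q z * deriv P z / (P z - t)) = 0) := by
  have hsphere : sphere (0 : ℂ) |1| ⊆ {0}ᶜ := fun _ hz h0 => by simp_all
  have hPd : DifferentiableOn ℂ P {0}ᶜ := hP ▸ differentiableOn_sum_mul_zpow sP a
  have hQd : DifferentiableOn ℂ Q {0}ᶜ := hQ ▸ differentiableOn_sum_mul_zpow sQ b
  have hPc : ContinuousOn P (sphere 0 |1|) := hPd.continuousOn.mono hsphere
  have hPM : ∀ z ∈ sphere (0 : ℂ) |1|, ‖P z‖ ≤ M := fun z hz => by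
    rw [abs_one] at hz hPc
    exact hM ▸ le_csSup ((isCompact_sphere 0 1).image_of_continuousOn hPc.norm).bddAbove
      ⟨z, hz, rfl⟩
  have hQP' : ContinuousOn (fun z => Q z * deriv P z) (sphere 0 |1|) :=
    (hQd.continuousOn.mul (hPd.deriv isOpen_compl_singleton).continuousOn).mono hsphere
  rw [forall_circleIntegral_pow_mul_deriv_eq_zero_iff isOpen_compl_singleton hPd hQd hsphere]
  exact forall_circleIntegral_pow_mul_eq_zero_iff hQP'.circleIntegrable' hPc hPM
end

section
/- Let P ∈ ℂ[z,z⁻¹] be a Laurent polynomial, and suppose that for each k = 1,…,l there are a polynomial P_k ∈ ℂ[z] and a Laurent polynomial W_k ∈ ℂ[z,z⁻¹] with P(z) = P_k(W_k(z)) for all z ≠ 0. Then for every choice of polynomials Q_1,…,Q_l ∈ ℂ[z], the Laurent polynomial Q(z) = Q_1(W_1(z)) + … + Q_l(W_l(z)) satisfies ∮_{|z|=1} P(z)^k Q'(z) dz = 0 for every integer k ≥ 0. -/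
/-!
On the unit circle `P = P_i ∘ W_i`, so `P ^ k * (Q_i ∘ W_i)' = (P_i ^ k * Q_i') (W_i) * W_i'`
is the derivative of `R_i ∘ W_i`, where `R_i` is a polynomial antiderivative of
`P_i ^ k * Q_i'`. Hence `P ^ k * Q'` has the primitive `∑ i, R_i ∘ W_i` on the circle, and its
contour integral vanishes.
-/

open Polynomial Metric

theorem Polynomial.exists_derivative_eq {K : Type*} [Field K] [CharZero K] (S : K[X]) :
    ∃ R : K[X], derivative R = S := by
  refine ⟨∑ n ∈ S.support, C (S.coeff n / (n + 1)) * X ^ (n + 1), ?_⟩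
  have hterm : ∀ n ∈ S.support,
      derivative (C (S.coeff n / (n + 1)) * X ^ (n + 1) : K[X]) = C (S.coeff n) * X ^ n := by
    intro n _
    rw [derivative_C_mul_X_pow, Nat.cast_add_one, div_mul_cancel₀ _ (Nat.cast_add_one_ne_zero n),
      Nat.add_sub_cancel]
  rw [map_sum, Finset.sum_congr rfl hterm]
  simpa [C_mul_X_pow_eq_monomial] using S.as_sum_support.symm

theorem differentiableAt_sum_mul_zpow {s : Finset ℤ} (c : ℤ → ℂ) {z : ℂ} (hz : z ≠ 0) :
    DifferentiableAt ℂ (fun z => ∑ k ∈ s, c k * z ^ k) z :=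
  DifferentiableAt.fun_sum fun k _ =>
    ((differentiableAt_zpow (m := k)).2 (Or.inl hz)).const_mul (c k)

theorem hasDerivAt_eval_comp_of_derivative_eq {P W : ℂ → ℂ} {P₀ Q₀ R : ℂ[X]} {k : ℕ} {z : ℂ}
    (hR : derivative R = P₀ ^ k * derivative Q₀) (hW : DifferentiableAt ℂ W z)
    (hcomp : P z = P₀.eval (W z)) :
    HasDerivAt (fun z => R.eval (W z)) (P z ^ k * deriv (fun z => Q₀.eval (W z)) z) z := by
  have hQ : HasDerivAt (fun z => Q₀.eval (W z)) ((derivative Q₀).eval (W z) * deriv W z) z :=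
    (Q₀.hasDerivAt (W z)).comp z hW.hasDerivAt
  have hRW := (R.hasDerivAt (W z)).comp z hW.hasDerivAt
  rwa [hR, eval_mul, eval_pow, mul_assoc, ← hcomp, ← hQ.deriv] at hRW

theorem circleIntegral_pow_mul_deriv_sum_eval_comp_eq_zero {ι : Type*} (s : Finset ι)
    {c : ℂ} {r : ℝ} (P : ℂ → ℂ) (W : ι → ℂ → ℂ) (Pk Qk : ι → ℂ[X])
    (hW : ∀ i ∈ s, ∀ z ∈ sphere c |r|, DifferentiableAt ℂ (W i) z)
    (hcomp : ∀ i ∈ s, ∀ z ∈ sphere c |r|, P z = (Pk i).eval (W i z)) (k : ℕ) :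
    (∮ z in C(c, r), P z ^ k * deriv (fun z => ∑ i ∈ s, (Qk i).eval (W i z)) z) = 0 := by
  choose R hR using fun i => exists_derivative_eq (Pk i ^ k * derivative (Qk i))
  refine circleIntegral.integral_eq_zero_of_hasDerivWithinAt'
    (f := fun z => ∑ i ∈ s, (R i).eval (W i z)) fun z hz => HasDerivAt.hasDerivWithinAt ?_
  have hterm : ∀ i ∈ s, HasDerivAt (fun z => (R i).eval (W i z))
      (P z ^ k * deriv (fun z => (Qk i).eval (W i z)) z) z := fun i hi =>
    hasDerivAt_eval_comp_of_derivative_eq (hR i) (hW i hi z hz) (hcomp i hi z hz)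
  have hQ : deriv (fun z => ∑ i ∈ s, (Qk i).eval (W i z)) z
      = ∑ i ∈ s, deriv (fun z => (Qk i).eval (W i z)) z :=
    deriv_fun_sum fun i hi => (Qk i).differentiable.differentiableAt.comp z (hW i hi z hz)
  rw [hQ, Finset.mul_sum]
  exact HasDerivAt.fun_sum hterm

theorem weak_composition_sufficient_general
    (l : ℕ)
    (P : ℂ → ℂ)
    (Pk Qk : Fin l → Polynomial ℂ)
    (sW : Fin l → Finset ℤ) (w : Fin l → ℤ → ℂ)
    (W : Fin l → ℂ → ℂ) (hW : ∀ i, W i = fun z => ∑ k ∈ sW i, w i k * z ^ k)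
    (hcomp : ∀ i : Fin l, ∀ z : ℂ, z ≠ 0 → P z = (Pk i).eval (W i z))
    (Q : ℂ → ℂ) (hQ : Q = fun z => ∑ i : Fin l, (Qk i).eval (W i z)) :
    ∀ k : ℕ, (∮ z in C(0, 1), P z ^ k * deriv Q z) = 0 := by
  have hne : ∀ z ∈ sphere (0 : ℂ) |1|, z ≠ 0 := fun z hz h => by simp [h] at hz
  subst hQ
  exact circleIntegral_pow_mul_deriv_sum_eval_comp_eq_zero _ P W Pk Qk
    (fun i _ z hz => hW i ▸ differentiableAt_sum_mul_zpow (w i) (hne z hz))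
    (fun i _ z hz => hcomp i z (hne z hz))

/-- Sufficiency of the weak composition condition.
Suppose the Laurent polynomial `P` factors as `P = P_i ∘ W_i` for `i = 1,…,l`, with each
`P_i` a polynomial and each `W_i` a Laurent polynomial.  Then for every choice of
polynomials `Q_1,…,Q_l`, the Laurent polynomial `Q = Q_1 ∘ W_1 + … + Q_l ∘ W_l`
satisfies `∮_{|z|=1} P(z)^k Q'(z) dz = 0` for all `k ≥ 0`. -/
theorem weak_composition_sufficient
    (l : ℕ) (sP : Finset ℤ) (a : ℤ → ℂ)
    (P : ℂ → ℂ) (hP : P = fun z => ∑ k ∈ sP, a k * z ^ k)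
    (Pk Qk : Fin l → Polynomial ℂ)
    (sW : Fin l → Finset ℤ) (w : Fin l → ℤ → ℂ)
    (W : Fin l → ℂ → ℂ) (hW : ∀ i, W i = fun z => ∑ k ∈ sW i, w i k * z ^ k)
    (hcomp : ∀ i : Fin l, ∀ z : ℂ, z ≠ 0 → P z = (Pk i).eval (W i z))
    (Q : ℂ → ℂ) (hQ : Q = fun z => ∑ i : Fin l, (Qk i).eval (W i z)) :
    ∀ k : ℕ, (∮ z in C(0, 1), P z ^ k * deriv Q z) = 0 :=
  weak_composition_sufficient_general l P Pk Qk sW w W hW hcomp Q hQ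
end

section
/- Let n ≥ 1 and let G be a 2-transitive subgroup of the symmetric group on {1,…,2n}. Let G act on ℚ^{2n} by permuting coordinates, and let v ∈ ℚ^{2n} be the vector whose first n coordinates equal 1 and whose last n coordinates equal −1. Then the standard basis vector e₁ belongs to V + ℚ·(1,1,…,1), where V is the ℚ-linear span of the orbit {g·v : g ∈ G}. -/
/-!
Sum the translates `g • v` over the stabiliser `H` of the first point in `G`. The result `u` is
`H`-invariant, and by 2-transitivity `H` is transitive on the remaining points, so `u` is
constant, say `c`, off the first point: `u = (u₀ - c) • e₁ + c • 𝟙`. Hence `e₁` lies in the span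
as soon as `u₀ ≠ c`; if `u₀ = c` then `u` is constant, and comparing `u₀ = |H| v₀` with
`∑ u = |H| ∑ v` shows that `v₀` is the mean of `v`, which fails for `v₀ = 1`, `∑ v = 0`.
-/

open Equiv Submodule

section OrbitSum

variable {X K : Type*} [Field K]

def orbitSum (H : Subgroup (Perm X)) [Fintype H] (v : X → K) : X → K :=
  ∑ g : H, fun x => v ((g : Perm X)⁻¹ x)

variable (H : Subgroup (Perm X)) [Fintype H] (v : X → K)

theorem orbitSum_apply (x : X) : orbitSum H v x = ∑ g : H, v ((g : Perm X)⁻¹ x) :=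
  Finset.sum_apply x _ _

theorem orbitSum_apply_perm {h : Perm X} (hh : h ∈ H) (x : X) :
    orbitSum H v (h x) = orbitSum H v x := by
  simp only [orbitSum_apply]
  refine Fintype.sum_equiv (Equiv.mulLeft ⟨h, hh⟩⁻¹) _ _ fun g => ?_
  simp [mul_inv_rev]

theorem orbitSum_apply_of_forall_fixed {x₀ : X} (hfix : ∀ g ∈ H, g x₀ = x₀) :
    orbitSum H v x₀ = Fintype.card H • v x₀ := by
  rw [orbitSum_apply, ← Finset.card_univ, ← Finset.sum_const]
  refine Finset.sum_congr rfl fun g _ => ?_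
  rw [Perm.inv_eq_iff_eq.mpr (hfix g g.2).symm]

theorem sum_orbitSum [Fintype X] : ∑ x, orbitSum H v x = Fintype.card H • ∑ x, v x := by
  simp only [orbitSum_apply]
  rw [Finset.sum_comm, ← Finset.card_univ, ← Finset.sum_const]
  exact Finset.sum_congr rfl fun g _ => Equiv.sum_comp _ v

theorem orbitSum_mem_span {G : Subgroup (Perm X)} (hHG : H ≤ G) :
    orbitSum H v ∈ span K {x | ∃ g ∈ G, x = fun j => v (g⁻¹ j)} :=
  sum_mem fun g _ => subset_span ⟨g, hHG g.2, rfl⟩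

end OrbitSum

theorem single_mem_sup_span_const {X K : Type*} [DecidableEq X] [Field K]
    {V : Submodule K (X → K)} {u : X → K} (hu : u ∈ V) {x₀ : X} {c : K}
    (hc : ∀ x ≠ x₀, u x = c) (hne : u x₀ ≠ c) :
    Pi.single x₀ 1 ∈ V ⊔ span K {fun _ => 1} := by
  have hsingle : Pi.single x₀ 1 = (u x₀ - c)⁻¹ • (u - c • fun _ => 1) := by
    have : u x₀ - c ≠ 0 := sub_ne_zero.mpr hne
    funext x
    rcases eq_or_ne x x₀ with rfl | hx
    · simp [this]
    · simp [hx, hc x hx]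
  rw [hsingle]
  exact smul_mem _ _ <|
    sub_mem (mem_sup_left hu) (smul_mem _ _ (mem_sup_right (mem_span_singleton_self _)))

theorem single_mem_span_orbit_sup_const {X K : Type*} [Fintype X] [DecidableEq X] [Field K]
    [CharZero K] (G : Subgroup (Perm X)) (x₀ : X)
    (htrans : ∀ k l, k ≠ x₀ → l ≠ x₀ → ∃ g ∈ G, g x₀ = x₀ ∧ g k = l)
    (v : X → K) (hv : (Fintype.card X : K) * v x₀ ≠ ∑ x, v x) :
    Pi.single x₀ 1 ∈ span K {x | ∃ g ∈ G, x = fun j => v (g⁻¹ j)} ⊔ span K {fun _ => 1} := by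
  classical
  set H := G ⊓ MulAction.stabilizer (Perm X) x₀
  have hfix : ∀ g ∈ H, g x₀ = x₀ := fun g hg => hg.2
  obtain ⟨c, hc⟩ : ∃ c, ∀ x ≠ x₀, orbitSum H v x = c := by
    by_cases h : ∃ k, k ≠ x₀
    · obtain ⟨k, hk⟩ := h
      refine ⟨orbitSum H v k, fun l hl => ?_⟩
      obtain ⟨g, hgG, hgx₀, rfl⟩ := htrans k l hk hl
      exact orbitSum_apply_perm H v ⟨hgG, hgx₀⟩ k
    · exact ⟨0, fun x hx => (h ⟨x, hx⟩).elim⟩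
  refine single_mem_sup_span_const (orbitSum_mem_span H v inf_le_left) hc fun hx₀ => hv ?_
  have hconst : ∀ x, orbitSum H v x = c := fun x => by
    rcases eq_or_ne x x₀ with rfl | hx
    exacts [hx₀, hc x hx]
  have hH : (Fintype.card H : K) ≠ 0 := Nat.cast_ne_zero.mpr Fintype.card_ne_zero
  have hsum := sum_orbitSum H v
  rw [Finset.sum_congr rfl fun x _ => hconst x, ← hx₀,
    orbitSum_apply_of_forall_fixed H v hfix] at hsum
  simp only [Finset.sum_const, Finset.card_univ, nsmul_eq_mul] at hsum
  apply mul_left_cancel₀ hH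
  linear_combination hsum

theorem sum_ite_lt_neg_eq_zero {R : Type*} [AddCommGroup R] (n : ℕ) (a : R) :
    ∑ i : Fin (2 * n), (if (i : ℕ) < n then a else -a) = 0 := by
  rw [Fin.sum_univ_eq_sum_range (fun i => if i < n then a else -a), two_mul, Finset.sum_range_add]
  simp [Finset.sum_ite_of_true]

/-- Let `G` be a 2-transitive subgroup of the symmetric group on `{0,…,2n-1}` (0-indexed
version of `{1,…,2n}`), acting on `ℚ^{2n}` by permuting coordinates `(g·x)_{g(i)} = x_i`.
Let `v` be the vector with first `n` coordinates `1` and last `n` coordinates `-1`.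
Then `e₁ ∈ V + ℚ·(1,…,1)`, where `V` is the span of the orbit `{g·v : g ∈ G}`. -/
theorem two_transitive_first_basis_vector
    (n : ℕ) (hn : 1 ≤ n)
    (G : Subgroup (Equiv.Perm (Fin (2 * n))))
    (h2trans : ∀ i j k l : Fin (2 * n), i ≠ j → k ≠ l → ∃ g ∈ G, g i = k ∧ g j = l)
    (v : Fin (2 * n) → ℚ) (hv : v = fun i : Fin (2 * n) => if (i : ℕ) < n then (1 : ℚ) else -1)
    (e₁ : Fin (2 * n) → ℚ) (he₁ : e₁ = fun i : Fin (2 * n) => if (i : ℕ) = 0 then (1 : ℚ) else 0) :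
    e₁ ∈ Submodule.span ℚ {x : Fin (2 * n) → ℚ | ∃ g ∈ G, x = fun j => v (g⁻¹ j)} ⊔
      Submodule.span ℚ {fun _ : Fin (2 * n) => (1 : ℚ)} := by
  let x₀ : Fin (2 * n) := ⟨0, by omega⟩
  have he₁ : e₁ = Pi.single x₀ 1 := by
    funext i
    simp [he₁, Pi.single_apply, Fin.ext_iff, x₀]
  rw [he₁]
  refine single_mem_span_orbit_sup_const G x₀
    (fun k l hk hl => h2trans x₀ k x₀ l hk.symm hl.symm) v ?_
  have hvx₀ : v x₀ = 1 := by simp [hv, x₀, show 0 < n from hn]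
  rw [hv, sum_ite_lt_neg_eq_zero, ← hv, hvx₀]
  simp
  omega
end

section
/- Let n ≥ 1 and let G be a transitive subgroup of the symmetric group on {1,…,2n}. Suppose G admits two distinct imprimitivity systems ℬ₁ ≠ ℬ₂, each of whose blocks has exactly two elements, one in {1,…,n} and one in {n+1,…,2n}. Then G has a block B with 1 ∈ B, |B| ≥ 2, and B ⊆ {1,…,n}. -/
/-!
A system of two-element blocks is the same as a `G`-equivariant fixed-point-free involution `p`
(each point is sent to the other point of its block), and distinct systems give distinct
involutions. If both involutions swap the two halves, their composite `σ = q ∘ p` preserves each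
half, commutes with `G` and moves every point: if `σ` fixed a point, `p` and `q` would agree
there, hence everywhere by equivariance and transitivity, and the two systems would coincide.
The cycle of `σ` through `0` is then a block, because `G` permutes the cycles of a permutation
it commutes with; it lies in the lower half and contains `0 ≠ σ 0`.
-/

open Equiv MulAction Set
open scoped Pointwise

namespace MulAction

variable {G X : Type*} [Group G] [MulAction G X]

theorem smul_set_pair (g : G) (a b : X) : g • ({a, b} : Set X) = {g • a, g • b} := by
  rw [smul_set_insert, smul_set_singleton]

theorem ncard_eq_two_of_smul_eq_pair {B L : Set X} {g : G}
    (h : ∃ a ∈ L, ∃ b ∉ L, g • B = {a, b}) : B.ncard = 2 := by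
  obtain ⟨a, ha, b, hb, hB⟩ := h
  rw [← ncard_smul_set g B, hB, ncard_pair (ne_of_mem_of_not_mem ha hb)]

variable (G) in
open Classical in
noncomputable def blockPartner (B : Set X) (x : X) : X :=
  if h : ∃ y, ∃ g : G, g • B = {x, y} then h.choose else x

section BlockPartner

variable [IsPretransitive G X] {B : Set X}

variable (G) in
theorem exists_smul_eq_pair_blockPartner (hB : B.ncard = 2) (x : X) :
    ∃ g : G, g • B = {x, blockPartner G B x} := by
  have h : ∃ y, ∃ g : G, g • B = {x, y} := by
    obtain ⟨a, b, -, rfl⟩ := ncard_eq_two.mp hB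
    obtain ⟨g, rfl⟩ := exists_smul_eq G a x
    exact ⟨g • b, g, smul_set_pair g a b⟩
  rw [blockPartner, dif_pos h]
  exact h.choose_spec

theorem blockPartner_ne (hB : B.ncard = 2) (x : X) : blockPartner G B x ≠ x := by
  intro hx
  obtain ⟨g, hg⟩ := exists_smul_eq_pair_blockPartner G hB x
  have := ncard_smul_set g B
  rw [hg, hx, pair_eq_singleton, ncard_singleton, hB] at this
  omega

theorem IsBlock.eq_blockPartner (hB : IsBlock G B) (hB₂ : B.ncard = 2) {g : G} {x y : X}
    (h : g • B = {x, y}) : y = blockPartner G B x := by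
  obtain ⟨g', hg'⟩ := exists_smul_eq_pair_blockPartner G hB₂ x
  have hpair : ({x, y} : Set X) = {x, blockPartner G B x} := by
    rw [← h, ← hg']
    exact hB.smul_eq_smul_of_nonempty ⟨x, by simp [h, hg']⟩
  rcases pair_eq_pair_iff.mp hpair with ⟨-, hy⟩ | ⟨hx, -⟩
  · exact hy
  · exact absurd hx.symm (blockPartner_ne hB₂ x)

theorem IsBlock.blockPartner_smul (hB : IsBlock G B) (hB₂ : B.ncard = 2) (g : G) (x : X) :
    blockPartner G B (g • x) = g • blockPartner G B x := by
  obtain ⟨h, hh⟩ := exists_smul_eq_pair_blockPartner G hB₂ x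
  refine (hB.eq_blockPartner hB₂ (g := g * h) ?_).symm
  rw [mul_smul, hh, smul_set_pair]

theorem IsBlock.blockPartner_involutive (hB : IsBlock G B) (hB₂ : B.ncard = 2) :
    Function.Involutive (blockPartner G B) := fun x => by
  obtain ⟨g, hg⟩ := exists_smul_eq_pair_blockPartner G hB₂ x
  exact (hB.eq_blockPartner hB₂ (hg.trans (pair_comm _ _))).symm

theorem IsBlock.range_smul_eq_range_pair (hB : IsBlock G B) (hB₂ : B.ncard = 2) :
    range (fun g : G => g • B) = range fun x => ({x, blockPartner G B x} : Set X) := by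
  ext S
  constructor
  · rintro ⟨g, rfl⟩
    obtain ⟨a, b, -, hab⟩ := ncard_eq_two.mp hB₂
    have hg : g • B = {g • a, g • b} := by rw [hab, smul_set_pair]
    refine ⟨g • a, ?_⟩
    dsimp only
    rw [hg, ← hB.eq_blockPartner hB₂ hg]
  · rintro ⟨x, rfl⟩
    exact exists_smul_eq_pair_blockPartner G hB₂ x

theorem blockPartner_mem_iff {L : Set X} (hL : ∀ g : G, ∃ a ∈ L, ∃ b ∉ L, g • B = {a, b})
    (x : X) : blockPartner G B x ∈ L ↔ x ∉ L := by
  obtain ⟨g, hg⟩ := exists_smul_eq_pair_blockPartner G (ncard_eq_two_of_smul_eq_pair (hL 1)) x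
  obtain ⟨a, ha, b, hb, hab⟩ := hL g
  rcases pair_eq_pair_iff.mp (hg.symm.trans hab) with ⟨rfl, rfl⟩ | ⟨rfl, rfl⟩ <;> tauto

theorem blockPartner_ne_blockPartner {B₁ B₂ : Set X} (hB₁ : IsBlock G B₁) (hB₁₂ : B₁.ncard = 2)
    (hB₂ : IsBlock G B₂) (hB₂₂ : B₂.ncard = 2)
    (hne : range (fun g : G => g • B₁) ≠ range (fun g : G => g • B₂)) (x : X) :
    blockPartner G B₁ x ≠ blockPartner G B₂ x := by
  intro hx
  have heq : blockPartner G B₁ = blockPartner G B₂ := funext fun y => by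
    obtain ⟨g, rfl⟩ := exists_smul_eq G x y
    rw [hB₁.blockPartner_smul hB₁₂, hB₂.blockPartner_smul hB₂₂, hx]
  exact hne (by rw [hB₁.range_smul_eq_range_pair hB₁₂, hB₂.range_smul_eq_range_pair hB₂₂, heq])

end BlockPartner

theorem sameCycle_smul_smul_iff {σ : Perm X} (hσ : ∀ (g : G) (x : X), σ (g • x) = g • σ x)
    (g : G) (x y : X) : σ.SameCycle (g • x) (g • y) ↔ σ.SameCycle x y := by
  have hcomm : Commute σ (toPerm g) := Equiv.ext (hσ g)
  refine exists_congr fun k => ?_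
  rw [show (σ ^ k) (g • x) = g • (σ ^ k) x from DFunLike.congr_fun (hcomm.zpow_left k).eq x,
    smul_left_cancel_iff]

theorem isBlock_setOf_sameCycle {σ : Perm X} (hσ : ∀ (g : G) (x : X), σ (g • x) = g • σ x)
    (x : X) : IsBlock G {y | σ.SameCycle x y} := by
  have hsmul (g : G) (x : X) : g • {y | σ.SameCycle x y} = {y | σ.SameCycle (g • x) y} := by
    ext y
    rw [mem_smul_set_iff_inv_smul_mem, mem_ofPred_eq, mem_ofPred_eq,
      ← sameCycle_smul_smul_iff hσ g, smul_inv_smul]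
  rw [isBlock_iff_smul_eq_smul_of_nonempty]
  rintro g₁ g₂ ⟨y, hy₁, hy₂⟩
  rw [hsmul] at hy₁ hy₂
  rw [hsmul, hsmul]
  ext z
  exact ⟨fun h => hy₂.trans (hy₁.symm.trans h), fun h => hy₁.trans (hy₂.symm.trans h)⟩

theorem exists_isBlock_subset_of_ne_range_smul [Finite X] [IsPretransitive G X] {B₁ B₂ L : Set X}
    (hB₁ : IsBlock G B₁) (hB₂ : IsBlock G B₂)
    (hL₁ : ∀ g : G, ∃ a ∈ L, ∃ b ∉ L, g • B₁ = {a, b})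
    (hL₂ : ∀ g : G, ∃ a ∈ L, ∃ b ∉ L, g • B₂ = {a, b})
    (hne : range (fun g : G => g • B₁) ≠ range (fun g : G => g • B₂)) {x : X} (hx : x ∈ L) :
    ∃ B : Set X, IsBlock G B ∧ x ∈ B ∧ 2 ≤ B.ncard ∧ B ⊆ L := by
  have hB₁₂ := ncard_eq_two_of_smul_eq_pair (hL₁ 1)
  have hB₂₂ := ncard_eq_two_of_smul_eq_pair (hL₂ 1)
  have hp₂ := hB₂.blockPartner_involutive hB₂₂
  let σ : Perm X := hp₂.toPerm * (hB₁.blockPartner_involutive hB₁₂).toPerm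
  have hσ (y : X) : σ y = blockPartner G B₂ (blockPartner G B₁ y) := rfl
  have hσx : σ x ≠ x := fun h => blockPartner_ne_blockPartner hB₁ hB₁₂ hB₂ hB₂₂ hne x <| by
    rw [← hp₂ (blockPartner G B₁ x)]
    exact congrArg _ h
  have hσL : MapsTo σ L L := fun y hy => by
    rw [hσ, blockPartner_mem_iff hL₂, blockPartner_mem_iff hL₁, not_not]
    exact hy
  refine ⟨{y | σ.SameCycle x y}, isBlock_setOf_sameCycle (fun g y => ?_) x, .refl σ x, ?_, ?_⟩
  · rw [hσ, hσ, hB₁.blockPartner_smul hB₁₂, hB₂.blockPartner_smul hB₂₂]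
  · calc 2 = ({x, σ x} : Set X).ncard := (ncard_pair hσx.symm).symm
      _ ≤ _ := ncard_le_ncard (pair_subset (.refl σ x) (Perm.sameCycle_apply_right.2 (.refl σ x)))
  · rintro y hy
    obtain ⟨i, -, rfl⟩ := hy.exists_pow_eq'
    rw [Perm.coe_pow]
    exact hσL.iterate i hx

theorem isBlock_subgroup_perm_iff {α : Type*} (G : Subgroup (Perm α)) (B : Set α) :
    IsBlock G B ↔ ∀ g ∈ G, ⇑g '' B = B ∨ Disjoint (⇑g '' B) B :=
  isBlock_iff_smul_eq_or_disjoint.trans ⟨fun h g hg => h ⟨g, hg⟩, fun h g => h g g.2⟩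

theorem range_smul_subgroup_perm {α : Type*} (G : Subgroup (Perm α)) (B : Set α) :
    range (fun g : G => g • B) = {S | ∃ g ∈ G, S = ⇑g '' B} := by
  ext S
  exact ⟨fun ⟨g, hg⟩ => ⟨g, g.2, hg.symm⟩, fun ⟨g, hg, hS⟩ => ⟨⟨g, hg⟩, hS.symm⟩⟩

end MulAction

/-- Let `G` be a transitive subgroup of the symmetric group on `{0,…,2n-1}` (0-indexed version
of `{1,…,2n}`).  Suppose `G` admits two distinct imprimitivity systems, each of whose blocks
has exactly two elements, one in `{0,…,n-1}` and one in `{n,…,2n-1}`.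
Then `G` has a block `B` with `0 ∈ B`, `|B| ≥ 2` and `B ⊆ {0,…,n-1}`. -/
theorem two_pairing_systems_give_half_block
    (n : ℕ) (hn : 1 ≤ n)
    (G : Subgroup (Equiv.Perm (Fin (2 * n))))
    (htrans : ∀ i j : Fin (2 * n), ∃ g ∈ G, g i = j)
    (B₁ B₂ : Set (Fin (2 * n)))
    (hblock₁ : ∀ g ∈ G, ⇑g '' B₁ = B₁ ∨ Disjoint (⇑g '' B₁) B₁)
    (hblock₂ : ∀ g ∈ G, ⇑g '' B₂ = B₂ ∨ Disjoint (⇑g '' B₂) B₂)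
    (hshape₁ : ∀ g ∈ G, ∃ x y : Fin (2 * n), (x : ℕ) < n ∧ n ≤ (y : ℕ) ∧ ⇑g '' B₁ = {x, y})
    (hshape₂ : ∀ g ∈ G, ∃ x y : Fin (2 * n), (x : ℕ) < n ∧ n ≤ (y : ℕ) ∧ ⇑g '' B₂ = {x, y})
    (hdistinct : {B : Set (Fin (2 * n)) | ∃ g ∈ G, B = ⇑g '' B₁} ≠
      {B : Set (Fin (2 * n)) | ∃ g ∈ G, B = ⇑g '' B₂}) :
    ∃ B : Set (Fin (2 * n)),
      (∀ g ∈ G, ⇑g '' B = B ∨ Disjoint (⇑g '' B) B) ∧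
      (∃ i : Fin (2 * n), (i : ℕ) = 0 ∧ i ∈ B) ∧
      2 ≤ B.ncard ∧ B ⊆ {i : Fin (2 * n) | (i : ℕ) < n} := by
  have : IsPretransitive G (Fin (2 * n)) :=
    ⟨fun i j => (htrans i j).elim fun g ⟨hg, hgi⟩ => ⟨⟨g, hg⟩, hgi⟩⟩
  have hL {B : Set (Fin (2 * n))}
      (hshape : ∀ g ∈ G, ∃ x y : Fin (2 * n), (x : ℕ) < n ∧ n ≤ (y : ℕ) ∧ ⇑g '' B = {x, y})
      (g : G) : ∃ a ∈ {i : Fin (2 * n) | (i : ℕ) < n}, ∃ b ∉ {i : Fin (2 * n) | (i : ℕ) < n},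
        g • B = {a, b} :=
    let ⟨a, b, ha, hb, hab⟩ := hshape g g.2
    ⟨a, ha, b, not_lt.2 hb, hab⟩
  obtain ⟨B, hB, h0, hcard, hBL⟩ := exists_isBlock_subset_of_ne_range_smul
    ((isBlock_subgroup_perm_iff G B₁).2 hblock₁) ((isBlock_subgroup_perm_iff G B₂).2 hblock₂)
    (hL hshape₁) (hL hshape₂)
    (by rwa [range_smul_subgroup_perm, range_smul_subgroup_perm]) (x := ⟨0, by omega⟩) hn
  exact ⟨B, (isBlock_subgroup_perm_iff G B).1 hB, ⟨_, rfl, h0⟩, hcard, hBL⟩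
end

section
/- Let n be a prime number, and let G be a transitive subgroup of the symmetric group on {1,…,2n} containing the permutation σ_∞ = (1,2,…,n)(n+1,n+2,…,2n). Fix an integer r with 0 ≤ r < n and suppose that ℬ = {B_1,…,B_n} is an imprimitivity system of G where, for i = 1,…,n, B_i = {i, n + (((i − 1 + r) mod n) + 1)}. Suppose further that there exists σ ∈ G such that the image σ({1,…,n}) meets both {1,…,n} and {n+1,…,2n}. Let G act on ℚ^{2n} by permuting coordinates, let v ∈ ℚ^{2n} be the vector whose first n coordinates equal 1 and whose last n coordinates equal −1, and let w ∈ ℚ^{2n} be the indicator vector of the block B₁ (value 1 on the two elements of B₁, 0 elsewhere). Then the standard basis vector e₁ belongs to V + ℚ·w, where V is the ℚ-linear span of the orbit {g·v : g ∈ G}. -/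
/-!
Restricted to the first half `{0, …, n-1}`, the span `V` of the orbit of `v` becomes a subspace of
`ℚⁿ` that is invariant under the cyclic shift (as `σ_∞ ∈ G`), contains the constants, and contains
a non-constant vector (the restriction of `σ • v`). For `n` prime the cyclic shift acts on the
zero-sum hyperplane through the field `ℚ[X] ⧸ Φₙ`, of degree `n - 1`, so any non-zero invariant
subspace of the hyperplane is all of it; hence the restriction of `V` is `ℚⁿ`, and some `x ∈ V`
restricts to the indicator of `0`. Since `G` permutes the blocks `{i, n + (i + r) % n}` and `v`
sums to zero on each of them, so does every vector of `V`; thus `x = e₀ - e_{n+r}` and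
`e₀ = x / 2 + w / 2`.
-/

open Polynomial Fin.NatCast

section CyclicShift

variable (R : Type*) [CommSemiring R] (n : ℕ) [NeZero n]

def cyclicShift : Module.End R (Fin n → R) := LinearMap.funLeft R R (· + 1)

variable {R n}

@[simp] lemma cyclicShift_apply (x : Fin n → R) (i : Fin n) :
    cyclicShift R n x i = x (i + 1) := rfl

lemma cyclicShift_pow_apply (k : ℕ) (x : Fin n → R) (i : Fin n) :
    (cyclicShift R n ^ k) x i = x (i + k) := by
  induction k generalizing x with
  | zero => simp
  | succ k ih => rw [pow_succ, Module.End.mul_apply, ih]; simp [add_assoc]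

lemma sum_cyclicShift_apply (x : Fin n → R) : ∑ i, cyclicShift R n x i = ∑ i, x i :=
  Fintype.sum_equiv (Equiv.addRight 1) _ _ fun _ => rfl

lemma eq_of_cyclicShift_eq_self {x : Fin n → R} (hx : cyclicShift R n x = x) (i j : Fin n) :
    x i = x j := by
  have hfix (k : ℕ) : (cyclicShift R n ^ k) x = x := by
    rw [Module.End.pow_apply, Function.iterate_fixed hx]
  have := congrFun (hfix (j - i : Fin n)) i
  rw [cyclicShift_pow_apply] at this
  simpa using this.symm

end CyclicShift

section CyclicShiftPrime

variable {n : ℕ} [NeZero n]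

lemma aeval_cyclotomic_cyclicShift {R : Type*} [CommRing R] (hn : n.Prime) (x : Fin n → R) :
    aeval (cyclicShift R n) (cyclotomic n R) x = fun _ => ∑ j, x j := by
  have := Fact.mk hn
  ext i
  simp only [cyclotomic_prime, map_sum, map_pow, aeval_X, LinearMap.sum_apply, Finset.sum_apply,
    cyclicShift_pow_apply]
  rw [← Fin.sum_univ_eq_sum_range (fun k => x (i + k))]
  simp only [Fin.cast_val_eq_self]
  exact Fintype.sum_equiv (Equiv.addLeft i) _ _ fun _ => rfl

lemma eq_zero_of_aeval_cyclicShift_eq_zero (hn : n.Prime) {d : Fin n → ℚ} (hd : d ≠ 0)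
    (hsum : ∑ i, d i = 0) {p : ℚ[X]} (hp : aeval (cyclicShift ℚ n) p d = 0)
    (hdeg : p.degree < (n - 1 : ℕ)) : p = 0 := by
  by_contra hp0
  have hΦd : aeval (cyclicShift ℚ n) (cyclotomic n ℚ) d = 0 := by
    rw [aeval_cyclotomic_cyclicShift hn, hsum]; rfl
  have hndvd : ¬ cyclotomic n ℚ ∣ p := fun hdvd => hp0 <| eq_zero_of_dvd_of_degree_lt hdvd <| by
    rwa [degree_cyclotomic, Nat.totient_prime hn]
  obtain ⟨a, b, hab⟩ := (cyclotomic.irreducible_rat hn.pos).coprime_iff_not_dvd.mpr hndvd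
  apply hd
  simpa [hΦd, hp] using (congrArg (fun q => aeval (cyclicShift ℚ n) q d) hab).symm

theorem eq_top_of_cyclicShift_invariant (hn : n.Prime) {P : Submodule ℚ (Fin n → ℚ)}
    (hP : P ≤ P.comap (cyclicShift ℚ n)) (hone : (fun _ => 1) ∈ P) {y : Fin n → ℚ}
    (hy : y ∈ P) {i j : Fin n} (hij : y i ≠ y j) : P = ⊤ := by
  set d := cyclicShift ℚ n y - y
  have hdP : d ∈ P := sub_mem (Submodule.mem_comap.mp (hP hy)) hy
  have hd : d ≠ 0 := fun h => hij (eq_of_cyclicShift_eq_self (sub_eq_zero.mp h) i j)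
  have hdsum : ∑ i, d i = 0 := by
    simp only [d, Pi.sub_apply, Finset.sum_sub_distrib, sum_cyclicShift_apply, sub_self]
  let Z := LinearMap.ker (LinearMap.lsum ℚ (fun _ : Fin n => ℚ) ℚ fun _ => LinearMap.id)
  have hZ : Z ≤ Z.comap (cyclicShift ℚ n) := fun x hx => by
    simpa [Z, -cyclicShift_apply, sum_cyclicShift_apply] using hx
  let f := LinearMap.applyₗ d ∘ₗ (aeval (cyclicShift ℚ n)).toLinearMap ∘ₗ
    (degreeLT ℚ (n - 1)).subtype
  have hf : Function.Injective f := by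
    refine (injective_iff_map_eq_zero f).mpr fun q hq => Subtype.ext ?_
    exact eq_zero_of_aeval_cyclicShift_eq_zero hn hd hdsum hq (mem_degreeLT.mp q.2)
  have hfP : LinearMap.range f ≤ P := by
    rintro _ ⟨q, rfl⟩
    exact aeval_apply_smul_mem_of_le_comap hdP q _ hP
  have hfZ : LinearMap.range f ≤ Z := by
    rintro _ ⟨q, rfl⟩
    exact aeval_apply_smul_mem_of_le_comap (by simpa [Z] using hdsum) q _ hZ
  have hone_notMem : (fun _ => 1) ∉ LinearMap.range f := fun h => by
    simpa [Z, hn.ne_zero] using hfZ h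
  have hlt := Submodule.finrank_lt_finrank_of_lt <|
    SetLike.lt_iff_le_and_exists.mpr ⟨hfP, _, hone, hone_notMem⟩
  rw [LinearMap.finrank_range_of_inj hf, (degreeLTEquiv ℚ (n - 1)).finrank_eq,
    Module.finrank_fin_fun] at hlt
  refine Submodule.eq_top_of_finrank_eq (le_antisymm (Submodule.finrank_le P) ?_)
  rw [Module.finrank_fin_fun]
  omega

end CyclicShiftPrime

section OrbitSpan

variable {α K : Type*} [CommSemiring K] (G : Subgroup (Equiv.Perm α)) (v : α → K)

def orbitSpan : Submodule K (α → K) :=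
  Submodule.span K {x | ∃ g ∈ G, x = fun j => v (g⁻¹ j)}

variable {G v}

lemma comp_mem_orbitSpan {g : Equiv.Perm α} (hg : g ∈ G) : (fun j => v (g j)) ∈ orbitSpan G v :=
  Submodule.subset_span ⟨g⁻¹, inv_mem hg, by simp⟩

lemma comp_mem_orbitSpan_of_mem {g : Equiv.Perm α} (hg : g ∈ G) {x : α → K}
    (hx : x ∈ orbitSpan G v) : (fun j => x (g j)) ∈ orbitSpan G v := by
  suffices orbitSpan G v ≤ (orbitSpan G v).comap (LinearMap.funLeft K K g) from this hx
  refine Submodule.span_le.mpr ?_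
  rintro _ ⟨h, hh, rfl⟩
  exact comp_mem_orbitSpan (mul_mem (inv_mem hh) hg)

lemma add_apply_eq_zero_of_mem_orbitSpan {a b : α} (h : ∀ g ∈ G, v (g a) + v (g b) = 0)
    {x : α → K} (hx : x ∈ orbitSpan G v) : x a + x b = 0 := by
  suffices h : orbitSpan G v ≤
      LinearMap.ker (LinearMap.proj (R := K) (φ := fun _ : α => K) a + LinearMap.proj b) by
    exact LinearMap.mem_ker.mp (h hx)
  refine Submodule.span_le.mpr ?_
  rintro _ ⟨g, hg, rfl⟩
  exact h g⁻¹ (inv_mem hg)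

lemma map_funLeft_orbitSpan_le_comap_cyclicShift {n : ℕ} [NeZero n] {f : Fin n → α}
    {σ : Equiv.Perm α} (hσG : σ ∈ G) (hσ : ∀ i, σ (f i) = f (i + 1)) :
    (orbitSpan G v).map (LinearMap.funLeft K K f) ≤
      ((orbitSpan G v).map (LinearMap.funLeft K K f)).comap (cyclicShift K n) := by
  rintro _ ⟨x, hx, rfl⟩
  exact ⟨fun j => x (σ j), comp_mem_orbitSpan_of_mem hσG hx, funext fun i => by simp [hσ]⟩

end OrbitSpan

section PairBlocks

variable {n : ℕ}

def lowerHalf (n : ℕ) (i : Fin n) : Fin (2 * n) := Fin.castLE (by omega) i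

def upperHalf (n : ℕ) (i : Fin n) : Fin (2 * n) := ⟨n + i, by omega⟩

@[simp] lemma val_lowerHalf (i : Fin n) : (lowerHalf n i : ℕ) = i := rfl

@[simp] lemma val_upperHalf (i : Fin n) : (upperHalf n i : ℕ) = n + i := rfl

lemma lowerHalf_or_upperHalf (j : Fin (2 * n)) :
    (∃ i, lowerHalf n i = j) ∨ ∃ i, upperHalf n i = j := by
  by_cases hj : (j : ℕ) < n
  · exact Or.inl ⟨⟨j, hj⟩, rfl⟩
  · exact Or.inr ⟨⟨j - n, by omega⟩, Fin.ext (by simp; omega)⟩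

lemma lowerHalf_ne_upperHalf (i k : Fin n) : lowerHalf n i ≠ upperHalf n k :=
  fun h => by have := congrArg Fin.val h; simp at this; omega

def pairBlock (n r i : ℕ) : Set (Fin (2 * n)) := {x | (x : ℕ) = i ∨ (x : ℕ) = n + (i + r) % n}

def halfSign (n : ℕ) (x : Fin (2 * n)) : ℚ := if (x : ℕ) < n then 1 else -1

lemma halfSign_add_halfSign_of_mem_pairBlock {r j : ℕ} (hj : j < n) {a b : Fin (2 * n)}
    (ha : a ∈ pairBlock n r j) (hb : b ∈ pairBlock n r j) (hab : a ≠ b) :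
    halfSign n a + halfSign n b = 0 := by
  rcases ha with ha | ha <;> rcases hb with hb | hb
  all_goals first
    | exact absurd (Fin.ext (ha.trans hb.symm)) hab
    | simp [halfSign, ha, hb, hj]

lemma exists_image_pairBlock_eq {r : ℕ} {G : Subgroup (Equiv.Perm (Fin (2 * n)))}
    (htrans : ∀ i j : Fin (2 * n), ∃ g ∈ G, g i = j)
    (hsys : ∀ g ∈ G, ∃ i < n, ⇑g '' pairBlock n r 0 = pairBlock n r i)
    {g : Equiv.Perm (Fin (2 * n))} (hg : g ∈ G) {m : ℕ} (hm : m < n) :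
    ∃ j < n, ⇑g '' pairBlock n r m = pairBlock n r j := by
  obtain ⟨h, hhG, hh⟩ := htrans ⟨0, by omega⟩ ⟨m, by omega⟩
  obtain ⟨k, hk, hhk⟩ := hsys h hhG
  have hmk : m = k := by
    have hmem : (⟨m, by omega⟩ : Fin (2 * n)) ∈ pairBlock n r k :=
      hhk ▸ ⟨_, Or.inl rfl, hh⟩
    rcases hmem with hmem | hmem <;> simp at hmem <;> omega
  subst hmk
  rw [← hhk, ← Set.image_comp]
  exact hsys (g * h) (mul_mem hg hhG)

lemma orbitSpan_halfSign_antisymm [NeZero n] {r : ℕ} (hr : r < n)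
    {G : Subgroup (Equiv.Perm (Fin (2 * n)))} (htrans : ∀ i j : Fin (2 * n), ∃ g ∈ G, g i = j)
    (hsys : ∀ g ∈ G, ∃ i < n, ⇑g '' pairBlock n r 0 = pairBlock n r i)
    {x : Fin (2 * n) → ℚ} (hx : x ∈ orbitSpan G (halfSign n)) (i : Fin n) :
    x (lowerHalf n i) + x (upperHalf n (i + ⟨r, hr⟩)) = 0 := by
  refine add_apply_eq_zero_of_mem_orbitSpan (fun g hg => ?_) hx
  obtain ⟨j, hj, hgj⟩ := exists_image_pairBlock_eq htrans hsys hg i.isLt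
  have hlo : lowerHalf n i ∈ pairBlock n r i := Or.inl rfl
  have hup : upperHalf n (i + ⟨r, hr⟩) ∈ pairBlock n r i :=
    Or.inr (by simp [Fin.val_add])
  exact halfSign_add_halfSign_of_mem_pairBlock hj (hgj ▸ Set.mem_image_of_mem g hlo)
    (hgj ▸ Set.mem_image_of_mem g hup) (g.injective.ne (lowerHalf_ne_upperHalf _ _))

lemma eq_inv_two_smul_add_of_antisymm [NeZero n] {r : ℕ} (hr : r < n) {x : Fin (2 * n) → ℚ}
    (hlo : x ∘ lowerHalf n = Pi.single 0 1)
    (hanti : ∀ i, x (lowerHalf n i) + x (upperHalf n (i + ⟨r, hr⟩)) = 0) :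
    (fun j : Fin (2 * n) => if (j : ℕ) = 0 then (1 : ℚ) else 0) =
      (2 : ℚ)⁻¹ • x + (2 : ℚ)⁻¹ • fun j : Fin (2 * n) =>
        if (j : ℕ) = 0 ∨ (j : ℕ) = n + r then (1 : ℚ) else 0 := by
  have hlo' (i : Fin n) : x (lowerHalf n i) = if i = 0 then 1 else 0 := by
    simpa [Pi.single_apply] using congrFun hlo i
  funext j
  rcases lowerHalf_or_upperHalf j with ⟨i, rfl⟩ | ⟨k, rfl⟩
  · have : (i : ℕ) ≠ n + r := by omega
    simp only [val_lowerHalf, hlo', this, or_false, Pi.add_apply, Pi.smul_apply, smul_eq_mul]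
    simp only [Fin.val_eq_zero_iff]
    split_ifs <;> norm_num
  · obtain ⟨i, rfl⟩ : ∃ i, k = i + ⟨r, hr⟩ := ⟨k - ⟨r, hr⟩, (sub_add_cancel _ _).symm⟩
    have hne : n + ((i + ⟨r, hr⟩ : Fin n) : ℕ) ≠ 0 := by simp [NeZero.ne n]
    have hpartner : n + ((i + ⟨r, hr⟩ : Fin n) : ℕ) = n + r ↔ i = 0 :=
      (add_right_inj n).trans (Fin.val_inj.trans add_eq_right)
    simp only [val_upperHalf, eq_neg_of_add_eq_zero_right (hanti i), hlo', hpartner, hne,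
      false_or, if_false, Pi.add_apply, Pi.smul_apply, smul_eq_mul]
    split_ifs <;> norm_num

end PairBlocks

theorem prime_case_single_pairing_system_general
    (n : ℕ) (hn : n.Prime) (r : ℕ) (hr : r < n)
    (G : Subgroup (Equiv.Perm (Fin (2 * n))))
    (σinf : Equiv.Perm (Fin (2 * n))) (hσinfG : σinf ∈ G)
    (hσinf : ∀ i : Fin (2 * n),
      ((σinf i : ℕ) = if (i : ℕ) < n then ((i : ℕ) + 1) % n else n + (((i : ℕ) - n + 1) % n)))
    (htrans : ∀ i j : Fin (2 * n), ∃ g ∈ G, g i = j)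
    (B₀ : Set (Fin (2 * n))) (hB₀ : B₀ = {x : Fin (2 * n) | (x : ℕ) = 0 ∨ (x : ℕ) = n + r})
    (hsys : ∀ g ∈ G, ∃ i < n,
      ⇑g '' B₀ = {x : Fin (2 * n) | (x : ℕ) = i ∨ (x : ℕ) = n + ((i + r) % n)})
    (hmix : ∃ g ∈ G,
      (∃ x : Fin (2 * n), (x : ℕ) < n ∧ ((g x : ℕ) < n)) ∧
      (∃ x : Fin (2 * n), (x : ℕ) < n ∧ n ≤ (g x : ℕ)))
    (v : Fin (2 * n) → ℚ) (hv : v = fun i : Fin (2 * n) => if (i : ℕ) < n then (1 : ℚ) else -1)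
    (w : Fin (2 * n) → ℚ)
    (hw : w = fun i : Fin (2 * n) => if (i : ℕ) = 0 ∨ (i : ℕ) = n + r then (1 : ℚ) else 0)
    (e₁ : Fin (2 * n) → ℚ) (he₁ : e₁ = fun i : Fin (2 * n) => if (i : ℕ) = 0 then (1 : ℚ) else 0) :
    e₁ ∈ Submodule.span ℚ {x : Fin (2 * n) → ℚ | ∃ g ∈ G, x = fun j => v (g⁻¹ j)} ⊔
      Submodule.span ℚ {w} := by
  have : NeZero n := ⟨hn.ne_zero⟩
  obtain rfl : B₀ = pairBlock n r 0 := by rw [hB₀, pairBlock, zero_add, Nat.mod_eq_of_lt hr]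
  subst hv hw he₁
  change _ ∈ orbitSpan G (halfSign n) ⊔ _
  have hshift (i : Fin n) : σinf (lowerHalf n i) = lowerHalf n (i + 1) :=
    Fin.ext (by simp [hσinf, Fin.val_add])
  obtain ⟨σ, hσG, ⟨a, ha, hσa⟩, ⟨b, hb, hσb⟩⟩ := hmix
  have hP := eq_top_of_cyclicShift_invariant hn
    (map_funLeft_orbitSpan_le_comap_cyclicShift hσinfG hshift)
    ⟨_, comp_mem_orbitSpan (v := halfSign n) (one_mem G), funext fun i => if_pos i.isLt⟩
    ⟨_, comp_mem_orbitSpan (v := halfSign n) hσG, rfl⟩ (i := ⟨a, ha⟩) (j := ⟨b, hb⟩)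
    (by simp [halfSign, lowerHalf, hσa, not_lt.mpr hσb]; norm_num)
  obtain ⟨x, hxV, hx⟩ := hP.ge (Submodule.mem_top (x := Pi.single 0 1))
  rw [eq_inv_two_smul_add_of_antisymm hr hx (orbitSpan_halfSign_antisymm hr htrans hsys hxV)]
  exact Submodule.add_mem_sup (Submodule.smul_mem _ _ hxV)
    (Submodule.smul_mem _ _ (Submodule.mem_span_singleton_self _))

/-- Let `n` be prime, `G` a transitive subgroup of the symmetric group on `{0,…,2n-1}`
(0-indexed version of `{1,…,2n}`) containing `σ_∞ = (0,…,n-1)(n,…,2n-1)`.  Suppose the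
sets `B_i = {i, n + (i + r) mod n}`, `0 ≤ i < n`, form an imprimitivity system of `G`
(for a fixed `0 ≤ r < n`), and that some `σ ∈ G` maps `{0,…,n-1}` onto a set meeting
both halves.  With `G` acting on `ℚ^{2n}` by permuting coordinates, `v` the vector which
is `1` on the first half and `-1` on the second half, and `w` the indicator vector of the
block `B₀ = {0, n + r}`, the first standard basis vector `e₁` lies in `V + ℚ·w`, where
`V` is the span of the orbit of `v` under `G`. -/
theorem prime_case_single_pairing_system
    (n : ℕ) (hn : n.Prime) (r : ℕ) (hr : r < n)
    (G : Subgroup (Equiv.Perm (Fin (2 * n))))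
    (σinf : Equiv.Perm (Fin (2 * n))) (hσinfG : σinf ∈ G)
    (hσinf : ∀ i : Fin (2 * n),
      ((σinf i : ℕ) = if (i : ℕ) < n then ((i : ℕ) + 1) % n else n + (((i : ℕ) - n + 1) % n)))
    (htrans : ∀ i j : Fin (2 * n), ∃ g ∈ G, g i = j)
    (B₀ : Set (Fin (2 * n))) (hB₀ : B₀ = {x : Fin (2 * n) | (x : ℕ) = 0 ∨ (x : ℕ) = n + r})
    (hblock : ∀ g ∈ G, ⇑g '' B₀ = B₀ ∨ Disjoint (⇑g '' B₀) B₀)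
    (hsys : ∀ g ∈ G, ∃ i < n,
      ⇑g '' B₀ = {x : Fin (2 * n) | (x : ℕ) = i ∨ (x : ℕ) = n + ((i + r) % n)})
    (hmix : ∃ g ∈ G,
      (∃ x : Fin (2 * n), (x : ℕ) < n ∧ ((g x : ℕ) < n)) ∧
      (∃ x : Fin (2 * n), (x : ℕ) < n ∧ n ≤ (g x : ℕ)))
    (v : Fin (2 * n) → ℚ) (hv : v = fun i : Fin (2 * n) => if (i : ℕ) < n then (1 : ℚ) else -1)
    (w : Fin (2 * n) → ℚ)
    (hw : w = fun i : Fin (2 * n) => if (i : ℕ) = 0 ∨ (i : ℕ) = n + r then (1 : ℚ) else 0)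
    (e₁ : Fin (2 * n) → ℚ) (he₁ : e₁ = fun i : Fin (2 * n) => if (i : ℕ) = 0 then (1 : ℚ) else 0) :
    e₁ ∈ Submodule.span ℚ {x : Fin (2 * n) → ℚ | ∃ g ∈ G, x = fun j => v (g⁻¹ j)} ⊔
      Submodule.span ℚ {w} :=
  prime_case_single_pairing_system_general n hn r hr G σinf hσinfG hσinf htrans B₀ hB₀ hsys hmix v
    hv w hw e₁ he₁
end
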